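/- arXiv:1901.01533 — 4 statements merged into one kernel-verified Lean document; each statement's English description precedes it below -/
import Mathlib

section
/- Let F : ℝ → ℝ be a continuous map such that F(x+1) = F(x) + 1 for all x ∈ ℝ. Assume F has periodic orbits P_1, P_2, …, P_j such that the union of their convex hulls ⋃_{i=1}^j ⟨P_i⟩ is a connected set of diameter larger than 1. Then for every integer m ≥ 1, F has a periodic point of exact period m. -/
open Set

namespace PeriodsAux

/-- L-scheme configuration: three points `a < b < c` with `F a ≤ b`, `c ≤ F b`, `F c ≤ a`. -/
def LConf (F : ℝ → ℝ) : Prop :=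
  ∃ a b c : ℝ, a < b ∧ b < c ∧ F a ≤ b ∧ c ≤ F b ∧ F c ≤ a

/-- Monotone-direction pullback: if points `u ≤ v` of `[a,b]` satisfy `F u ≤ c`, `d ≤ F v`,
then there is a subinterval `[r,s] ⊆ [u,v]` mapped into `[c,d]` with `F r = c`, `F s = d`. -/
lemma pullback_mono (F : ℝ → ℝ) (hF : Continuous F) {u v c d : ℝ}
    (huv : u ≤ v) (hcd : c ≤ d) (h1 : F u ≤ c) (h2 : d ≤ F v) :
    ∃ r s, u ≤ r ∧ r ≤ s ∧ s ≤ v ∧ F r = c ∧ F s = d ∧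
      ∀ w, r ≤ w → w ≤ s → c ≤ F w ∧ F w ≤ d := by
  classical
  set S1 : Set ℝ := {w | w ∈ Icc u v ∧ F w ≤ c} with hS1
  have hS1ne : S1.Nonempty := ⟨u, ⟨le_refl u, huv⟩, h1⟩
  have hS1bdd : BddAbove S1 := ⟨v, fun w hw => hw.1.2⟩
  have hS1closed : IsClosed S1 := by
    have : S1 = Icc u v ∩ F ⁻¹' (Iic c) := rfl
    rw [this]
    exact isClosed_Icc.inter (isClosed_Iic.preimage hF)
  set r := sSup S1 with hr
  have hrS1 : r ∈ S1 := hS1closed.csSup_mem hS1ne hS1bdd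
  have hur : u ≤ r := hrS1.1.1
  have hrv : r ≤ v := hrS1.1.2
  have hFr_le : F r ≤ c := hrS1.2
  have hFr : F r = c := by
    by_contra hne
    have hlt : F r < c := lt_of_le_of_ne hFr_le hne
    have hrv' : r < v := by
      rcases lt_or_eq_of_le hrv with h | h
      · exact h
      · exfalso; rw [h] at hlt; linarith
    -- continuity: some point to the right of r still has F < c
    have hopen : IsOpen {w : ℝ | F w < c} := isOpen_lt hF continuous_const
    rcases Metric.isOpen_iff.1 hopen r hlt with ⟨ε, hε, hball⟩
    set w := min (r + ε / 2) v with hw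
    have hwr : r < w := lt_min (by linarith) hrv'
    have hwv : w ≤ v := min_le_right _ _
    have hwball : w ∈ Metric.ball r ε := by
      rw [Metric.mem_ball, Real.dist_eq, abs_sub_lt_iff]
      constructor
      · have : w ≤ r + ε / 2 := min_le_left _ _
        linarith
      · linarith
    have hwS1 : w ∈ S1 := ⟨⟨le_trans hur hwr.le, hwv⟩, (hball hwball).le⟩
    exact absurd (le_csSup hS1bdd hwS1) (not_le.2 hwr)
  set S2 : Set ℝ := {w | w ∈ Icc r v ∧ d ≤ F w} with hS2
  have hS2ne : S2.Nonempty := ⟨v, ⟨hrv, le_refl v⟩, h2⟩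
  have hS2bdd : BddBelow S2 := ⟨r, fun w hw => hw.1.1⟩
  have hS2closed : IsClosed S2 := by
    have : S2 = Icc r v ∩ F ⁻¹' (Ici d) := rfl
    rw [this]
    exact isClosed_Icc.inter (isClosed_Ici.preimage hF)
  set s := sInf S2 with hs
  have hsS2 : s ∈ S2 := hS2closed.csInf_mem hS2ne hS2bdd
  have hrs : r ≤ s := hsS2.1.1
  have hsv : s ≤ v := hsS2.1.2
  have hFs_ge : d ≤ F s := hsS2.2
  have hFs : F s = d := by
    by_contra hne
    have hgt : d < F s := lt_of_le_of_ne hFs_ge (Ne.symm hne)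
    have hrs' : r < s := by
      rcases lt_or_eq_of_le hrs with h | h
      · exact h
      · exfalso; rw [← h] at hgt; rw [hFr] at hgt; linarith
    have hopen : IsOpen {w : ℝ | d < F w} := isOpen_lt continuous_const hF
    rcases Metric.isOpen_iff.1 hopen s hgt with ⟨ε, hε, hball⟩
    set w := max (s - ε / 2) r with hw
    have hws : w < s := max_lt (by linarith) hrs'
    have hwr : r ≤ w := le_max_right _ _
    have hwball : w ∈ Metric.ball s ε := by
      rw [Metric.mem_ball, Real.dist_eq, abs_sub_lt_iff]
      constructor
      · linarith
      · have : s - ε / 2 ≤ w := le_max_left _ _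
        linarith
    have hwS2 : w ∈ S2 := ⟨⟨hwr, le_trans hws.le hsv⟩, (hball hwball).le⟩
    exact absurd (csInf_le hS2bdd hwS2) (not_le.2 hws)
  refine ⟨r, s, hur, hrs, hsv, hFr, hFs, fun w hrw hws => ⟨?_, ?_⟩⟩
  · by_contra hlt
    push_neg at hlt
    have hwS1 : w ∈ S1 := ⟨⟨le_trans hur hrw, le_trans hws hsv⟩, hlt.le⟩
    have := le_csSup hS1bdd hwS1
    have hwr : w = r := le_antisymm this hrw
    rw [hwr, hFr] at hlt; exact lt_irrefl c hlt
  · by_contra hgt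
    push_neg at hgt
    have hwS2 : w ∈ S2 := ⟨⟨hrw, le_trans hws hsv⟩, hgt.le⟩
    have := csInf_le hS2bdd hwS2
    have hws' : w = s := le_antisymm hws this
    rw [hws', hFs] at hgt; exact lt_irrefl d hgt

/-- General pullback: from witnesses `u, v ∈ [a,b]` with `F u ≤ c`, `d ≤ F v`, get a subinterval
of `[a,b]` mapped into `[c,d]` hitting both endpoints. -/
lemma pullback (F : ℝ → ℝ) (hF : Continuous F) {a b c d u v : ℝ}
    (hu : u ∈ Icc a b) (hv : v ∈ Icc a b) (hcd : c ≤ d)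
    (h1 : F u ≤ c) (h2 : d ≤ F v) :
    ∃ r s, a ≤ r ∧ r ≤ s ∧ s ≤ b ∧
      ((F r = c ∧ F s = d) ∨ (F r = d ∧ F s = c)) ∧
      ∀ w, r ≤ w → w ≤ s → c ≤ F w ∧ F w ≤ d := by
  rcases le_or_gt u v with huv | hvu
  · rcases pullback_mono F hF huv hcd h1 h2 with ⟨r, s, h₁, h₂, h₃, h₄, h₅, h₆⟩
    exact ⟨r, s, le_trans hu.1 h₁, h₂, le_trans h₃ hv.2, Or.inl ⟨h₄, h₅⟩, h₆⟩
  · -- use the reflected map G w = F (-w)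
    set G : ℝ → ℝ := fun w => F (-w) with hG
    have hGc : Continuous G := hF.comp continuous_neg
    have h1' : G (-u) ≤ c := by simpa [hG] using h1
    have h2' : d ≤ G (-v) := by simpa [hG] using h2
    have huv' : (-u) ≤ (-v) := by linarith
    rcases pullback_mono G hGc huv' hcd h1' h2'
      with ⟨r', s', h₁, h₂, h₃, h₄, h₅, h₆⟩
    refine ⟨-s', -r', ?_, by linarith, ?_, Or.inr ⟨by simpa [hG] using h₅, by simpa [hG] using h₄⟩,
      fun w hrw hws => ?_⟩
    · have : s' ≤ -v := h₃
      have : v ≤ -s' := by linarith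
      linarith [hv.1]
    · have : -u ≤ r' := h₁
      have : -r' ≤ u := by linarith
      linarith [hu.2]
    · have := h₆ (-w) (by linarith) (by linarith)
      simpa [hG] using this

end PeriodsAux

namespace PeriodsAux

/-- Covering-chain lemma: a cyclic chain of interval covers (given by explicit witness points)
yields a point whose iterates follow the chain and which is periodic of period `m`. -/
lemma chain (F : ℝ → ℝ) (hF : Continuous F) (m : ℕ)
    (lo hi wu wv : ℕ → ℝ)
    (hw : ∀ i, lo i ≤ wu i ∧ wu i ≤ hi i ∧ lo i ≤ wv i ∧ wv i ≤ hi i ∧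
          F (wu i) ≤ lo (i+1) ∧ hi (i+1) ≤ F (wv i))
    (hcyc0 : lo m = lo 0) (hcyc1 : hi m = hi 0) :
    ∃ y, (∀ i, i ≤ m → lo i ≤ F^[i] y ∧ F^[i] y ≤ hi i) ∧ F^[m] y = y := by
  classical
  have hlo : ∀ i, lo i ≤ hi i := fun i => le_trans (hw i).1 (hw i).2.1
  have key : ∀ t, t ≤ m → ∃ r s, r ≤ s ∧
      (∀ j w, j ≤ t → r ≤ w → w ≤ s → lo (m - t + j) ≤ F^[j] w ∧ F^[j] w ≤ hi (m - t + j)) ∧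
      ((F^[t] r = lo m ∧ F^[t] s = hi m) ∨ (F^[t] r = hi m ∧ F^[t] s = lo m)) := by
    intro t
    induction t with
    | zero =>
      intro _
      refine ⟨lo m, hi m, hlo m, ?_, Or.inl ⟨rfl, rfl⟩⟩
      intro j w hj hrw hws
      interval_cases j
      simpa using ⟨hrw, hws⟩
    | succ t ih =>
      intro ht
      obtain ⟨r, s, hrs, hslots, hends⟩ := ih (Nat.le_of_succ_le ht)
      set p := m - (t + 1) with hp
      have hp1 : p + 1 = m - t := by omega
      obtain ⟨hwu1, hwu2, hwv1, hwv2, hwu3, hwv3⟩ := hw p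
      have hur : F (wu p) ≤ r := by
        have := (hslots 0 r (Nat.zero_le t) le_rfl hrs).1
        simp only [Function.iterate_zero_apply, Nat.add_zero] at this
        calc F (wu p) ≤ lo (p + 1) := hwu3
        _ = lo (m - t) := by rw [hp1]
        _ ≤ r := this
      have hvs : s ≤ F (wv p) := by
        have := (hslots 0 s (Nat.zero_le t) hrs le_rfl).2
        simp only [Function.iterate_zero_apply, Nat.add_zero] at this
        calc s ≤ hi (m - t) := this
        _ = hi (p + 1) := by rw [hp1]
        _ ≤ F (wv p) := hwv3
      obtain ⟨r', s', h₁, h₂, h₃, h₄, h₅⟩ :=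
        pullback F hF (a := lo p) (b := hi p) ⟨hwu1, hwu2⟩ ⟨hwv1, hwv2⟩ hrs hur hvs
      refine ⟨r', s', h₂, ?_, ?_⟩
      · intro j w hj hrw hws
        cases j with
        | zero =>
          simp only [Function.iterate_zero_apply, Nat.add_zero]
          exact ⟨le_trans h₁ hrw, le_trans hws h₃⟩
        | succ j' =>
          have hj' : j' ≤ t := Nat.succ_le_succ_iff.1 hj
          have hFw : r ≤ F w ∧ F w ≤ s := h₅ w hrw hws
          have := hslots j' (F w) hj' hFw.1 hFw.2
          rw [Function.iterate_succ_apply]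
          have hidx : m - t + j' = m - (t + 1) + (j' + 1) := by omega
          rw [hidx] at this
          exact this
      · have er : F^[t+1] r' = F^[t] (F r') := Function.iterate_succ_apply F t r'
        have es : F^[t+1] s' = F^[t] (F s') := Function.iterate_succ_apply F t s'
        rcases h₄ with ⟨hr', hs'⟩ | ⟨hr', hs'⟩
        · rw [er, es, hr', hs']
          exact hends
        · rw [er, es, hr', hs']
          rcases hends with ⟨e1, e2⟩ | ⟨e1, e2⟩
          · exact Or.inr ⟨e2, e1⟩
          · exact Or.inl ⟨e2, e1⟩
  obtain ⟨r, s, hrs, hslots, hends⟩ := key m le_rfl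
  have hslots' : ∀ j w, j ≤ m → r ≤ w → w ≤ s → lo j ≤ F^[j] w ∧ F^[j] w ≤ hi j := by
    intro j w hj hrw hws
    have := hslots j w hj hrw hws
    rwa [Nat.sub_self, Nat.zero_add] at this
  have hcont : Continuous (fun w => F^[m] w - w) :=
    (hF.iterate m).sub continuous_id
  have hr0 : lo 0 ≤ r := by
    have := (hslots' 0 r (Nat.zero_le m) le_rfl hrs).1
    simpa using this
  have hs0 : s ≤ hi 0 := by
    have := (hslots' 0 s (Nat.zero_le m) hrs le_rfl).2
    simpa using this
  have : ∃ y, r ≤ y ∧ y ≤ s ∧ F^[m] y = y := by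
    rcases hends with ⟨e1, e2⟩ | ⟨e1, e2⟩
    · have h0r : F^[m] r - r ≤ 0 := by rw [e1, hcyc0]; linarith
      have h0s : 0 ≤ F^[m] s - s := by rw [e2, hcyc1]; linarith
      have := intermediate_value_Icc hrs hcont.continuousOn
      have h0m : (0:ℝ) ∈ Icc (F^[m] r - r) (F^[m] s - s) := ⟨h0r, h0s⟩
      obtain ⟨y, hy, hy0⟩ := this h0m
      have hy0' : F^[m] y - y = 0 := hy0
      exact ⟨y, hy.1, hy.2, by linarith⟩
    · have h0r : 0 ≤ F^[m] r - r := by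
        rw [e1, hcyc1]; linarith
      have h0s : F^[m] s - s ≤ 0 := by rw [e2, hcyc0]; linarith
      have := intermediate_value_Icc' hrs hcont.continuousOn
      have h0m : (0:ℝ) ∈ Icc (F^[m] s - s) (F^[m] r - r) := ⟨h0s, h0r⟩
      obtain ⟨y, hy, hy0⟩ := this h0m
      have hy0' : F^[m] y - y = 0 := hy0
      exact ⟨y, hy.1, hy.2, by linarith⟩
  obtain ⟨y, hry, hys, hper⟩ := this
  exact ⟨y, fun i hi' => hslots' i y hi' hry hys, hper⟩

end PeriodsAux

namespace PeriodsAux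

/-- An L-scheme configuration yields periodic points of all exact periods. -/
lemma lconf_periods (F : ℝ → ℝ) (hF : Continuous F) (h : LConf F) :
    ∀ m : ℕ, 1 ≤ m → ∃ y : ℝ, F^[m] y = y ∧ ∀ i, 1 ≤ i → i < m → F^[i] y ≠ y := by
  obtain ⟨a, b, c, hab, hbc, h1, h2, h3⟩ := h
  intro m hm
  rcases eq_or_lt_of_le hm with hm1 | hm2
  · -- m = 1 : a fixed point suffices
    have hcont : Continuous (fun w => F w - w) := hF.sub continuous_id
    have hb' : 0 ≤ F b - b := by linarith
    have hc' : F c - c ≤ 0 := by linarith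
    have := intermediate_value_Icc' hbc.le hcont.continuousOn
    obtain ⟨y, hy, hy0⟩ := this ⟨hc', hb'⟩
    have hy0' : F y - y = 0 := hy0
    refine ⟨y, ?_, ?_⟩
    · rw [← hm1, Function.iterate_one]; linarith
    · intro i hi1 him
      rw [← hm1] at him
      omega
  · -- m ≥ 2
    have hm2' : 2 ≤ m := hm2
    set lo : ℕ → ℝ := fun i => if i % m = 1 then a else b with hlo_def
    set hi : ℕ → ℝ := fun i => if i % m = 1 then b else c with hhi_def
    set wu : ℕ → ℝ := fun i => if i % m = 1 then a else c with hwu_def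
    have hmodsucc : ∀ i : ℕ, i % m = 1 → (i+1) % m ≠ 1 := by
      intro i hi1 hi2
      have : i % m = (i+1) % m := by rw [hi1, hi2]
      have h11 : i ≡ i + 1 [MOD m] := this
      have := (Nat.modEq_iff_dvd' (Nat.le_succ i)).1 h11
      simp only [Nat.succ_sub (le_refl i), Nat.sub_self] at this
      have hm1 : m ∣ 1 := by simpa using this
      have := Nat.le_of_dvd one_pos hm1
      omega
    have hw : ∀ i, lo i ≤ wu i ∧ wu i ≤ hi i ∧ lo i ≤ b ∧ b ≤ hi i ∧
        F (wu i) ≤ lo (i+1) ∧ hi (i+1) ≤ F b := by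
      intro i
      by_cases hi1 : i % m = 1
      · have hi2 := hmodsucc i hi1
        simp only [hlo_def, hhi_def, hwu_def, if_pos hi1, if_neg hi2]
        exact ⟨le_refl a, hab.le, hab.le, le_refl b, h1, h2⟩
      · simp only [hlo_def, hhi_def, hwu_def, if_neg hi1]
        refine ⟨hbc.le, le_refl c, le_refl b, hbc.le, ?_, ?_⟩
        · by_cases hi2 : (i+1) % m = 1
          · simp only [if_pos hi2]; linarith
          · simp only [if_neg hi2]; linarith
        · by_cases hi2 : (i+1) % m = 1
          · simp only [if_pos hi2]; linarith
          · simp only [if_neg hi2]; linarith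
    have h0m : (0:ℕ) % m = 0 % m := rfl
    have hmm : m % m = 0 := Nat.mod_self m
    have h0m' : (0:ℕ) % m = 0 := Nat.zero_mod m
    have hcyc0 : lo m = lo 0 := by simp [hlo_def, hmm, h0m']
    have hcyc1 : hi m = hi 0 := by simp [hhi_def, hmm, h0m']
    obtain ⟨y, hslots, hper⟩ := chain F hF m lo hi wu (fun _ => b) hw hcyc0 hcyc1
    have hperiodic : Function.IsPeriodicPt F m y := hper
    -- slot values
    have hslot0 : b ≤ y ∧ y ≤ c := by
      have := hslots 0 (Nat.zero_le m)
      simp only [Function.iterate_zero_apply, hlo_def, hhi_def, h0m', if_neg (by omega : ¬(0:ℕ) = 1)] at this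
      exact this
    have hslot1 : a ≤ F y ∧ F y ≤ b := by
      have := hslots 1 (by omega)
      have h1m : 1 % m = 1 := Nat.mod_eq_of_lt hm2
      simp only [Function.iterate_one, hlo_def, hhi_def, h1m, if_pos] at this
      exact this
    have hslotK : ∀ i, 2 ≤ i → i ≤ m - 1 → b ≤ F^[i] y ∧ F^[i] y ≤ c := by
      intro i hi2 him
      have him' : i < m := by omega
      have : i % m = i := Nat.mod_eq_of_lt him'
      have := hslots i (by omega)
      simp only [hlo_def, hhi_def, Nat.mod_eq_of_lt him', if_neg (by omega : ¬i = 1)] at this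
      exact this
    refine ⟨y, hper, ?_⟩
    intro d hd1 hdm heq
    set g := Nat.gcd d m with hg_def
    have hgper : Function.IsPeriodicPt F g y :=
      Function.IsPeriodicPt.gcd (x := y) (f := F) heq hperiodic
    have hg1 : 1 ≤ g := Nat.gcd_pos_of_pos_left m (by omega)
    have hgdvd : g ∣ m := Nat.gcd_dvd_right d m
    have hgled : g ≤ d := Nat.le_of_dvd (by omega) (Nat.gcd_dvd_left d m)
    have hglt : g < m := by omega
    rcases eq_or_lt_of_le hg1 with hg1' | hg2
    · -- g = 1 : F y = y
      have hFyy : F y = y := by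
        have h11 : F^[g] y = y := hgper
        rw [← hg1'] at h11
        simpa using h11
      have hyb : y = b := le_antisymm (by rw [← hFyy]; exact hslot1.2) hslot0.1
      have hFb : F b = b := by rw [← hyb, hFyy]
      have : c ≤ b := by rw [← hFb]; exact h2
      linarith
    · -- g ≥ 2, hence m ≥ 2g ≥ 4
      have hg2' : 2 ≤ g := hg2
      have hm2g : 2 * g ≤ m := by
        obtain ⟨k, hk⟩ := hgdvd
        have hk2 : 2 ≤ k := by
          by_contra hk2
          interval_cases k <;> omega
        calc 2 * g = g * 2 := by ring
        _ ≤ g * k := Nat.mul_le_mul_left g hk2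
        _ = m := hk.symm
      have hm4 : 4 ≤ m := by omega
      -- F^[g+1] y = F y lies in slot g+1 which is a K-slot
      have hgy : F^[g] y = y := hgper
      have hgp1 : F^[g+1] y = F y := by
        rw [add_comm, Function.iterate_add_apply, hgy, Function.iterate_one]
      have hgp1K : b ≤ F y ∧ F y ≤ c := by
        have := hslotK (g+1) (by omega) (by omega)
        rwa [hgp1] at this
      have hFyb : F y = b := le_antisymm hslot1.2 hgp1K.1
      have hF2 : F^[2] y = F b := by
        rw [show (2:ℕ) = 1 + 1 from rfl, Function.iterate_add_apply,
          Function.iterate_one, hFyb]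
      have hF2K : b ≤ F^[2] y ∧ F^[2] y ≤ c := hslotK 2 le_rfl (by omega)
      have hF2c : F^[2] y = c := by
        rw [hF2]; exact le_antisymm (hF2 ▸ hF2K.2) h2
      have hF3 : F^[3] y = F c := by
        rw [show (3:ℕ) = 1 + 2 from rfl, Function.iterate_add_apply,
          Function.iterate_one, hF2c]
      have hF3K : b ≤ F^[3] y ∧ F^[3] y ≤ c := hslotK 3 (by omega) (by omega)
      have : b ≤ F c := hF3 ▸ hF3K.1
      linarith

end PeriodsAux

namespace PeriodsAux

lemma lift_int (F : ℝ → ℝ) (hlift : ∀ x, F (x + 1) = F x + 1) (w : ℝ) (l : ℤ) :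
    F (w + l) = F w + l := by
  induction l using Int.induction_on with
  | zero => simp
  | succ k ih =>
    have h1 : w + ((k:ℤ)+1 : ℤ) = (w + (k:ℤ)) + 1 := by push_cast; ring
    rw [h1, hlift, ih]; push_cast; ring
  | pred k ih =>
    push_cast at ih ⊢
    have key := hlift (w + (-(k:ℝ) - 1))
    have h1 : w + (-(k:ℝ) - 1) + 1 = w + -(k:ℝ) := by ring
    rw [h1] at key
    have key2 : F (w + -(k:ℝ)) = F w + -(k:ℝ) := by
      convert ih using 3 <;> ring
    rw [key2] at key
    have goal2 : F (w + (-(k:ℝ) - 1)) = F w + (-(k:ℝ) - 1) := by linarith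
    convert goal2 using 2 <;> ring

lemma iter_lift_int (F : ℝ → ℝ) (hlift : ∀ x, F (x + 1) = F x + 1) (k : ℕ) (w : ℝ) (l : ℤ) :
    F^[k] (w + l) = F^[k] w + l := by
  induction k with
  | zero => simp
  | succ k ih =>
    rw [Function.iterate_succ_apply', Function.iterate_succ_apply', ih, lift_int F hlift]

lemma fix_iter (F : ℝ → ℝ) {c : ℝ} (hc : F c = c) (k : ℕ) : F^[k] c = c := by
  induction k with
  | zero => simp
  | succ k ih => rw [Function.iterate_succ_apply', ih, hc]

lemma disp_bound (F : ℝ → ℝ) (hF : Continuous F) (hlift : ∀ x, F (x + 1) = F x + 1) :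
    ∃ Tb Sb : ℝ, (∀ x : ℝ, F x ≤ x + Tb) ∧ (∀ x : ℝ, x - Sb ≤ F x) := by
  set g : ℝ → ℝ := fun w => F w - w with hg
  have hgc : Continuous g := hF.sub continuous_id
  have hgper : ∀ x : ℝ, g x = g (Int.fract x) := by
    intro x
    have h1 : x = Int.fract x + (⌊x⌋ : ℤ) := by rw [add_comm]; exact (Int.floor_add_fract x).symm
    have h2 : F x = F (Int.fract x) + (⌊x⌋ : ℤ) := by
      conv_lhs => rw [h1]
      exact lift_int F hlift _ _
    simp only [hg]
    rw [h2]
    have h3 : x = Int.fract x + (⌊x⌋:ℤ) := h1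
    linarith [h3]
  obtain ⟨w₁, _, hw₁⟩ := isCompact_Icc.exists_isMaxOn (s := Icc (0:ℝ) 1)
    ⟨0, by norm_num⟩ hgc.continuousOn
  obtain ⟨w₂, _, hw₂⟩ := isCompact_Icc.exists_isMinOn (s := Icc (0:ℝ) 1)
    ⟨0, by norm_num⟩ hgc.continuousOn
  refine ⟨g w₁, -(g w₂), fun x => ?_, fun x => ?_⟩
  · have hfr : Int.fract x ∈ Icc (0:ℝ) 1 := ⟨Int.fract_nonneg x, (Int.fract_lt_one x).le⟩
    have h4 : g (Int.fract x) ≤ g w₁ := hw₁ hfr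
    rw [← hgper x] at h4
    simp only [hg] at h4 ⊢
    linarith
  · have hfr : Int.fract x ∈ Icc (0:ℝ) 1 := ⟨Int.fract_nonneg x, (Int.fract_lt_one x).le⟩
    have h4 : g w₂ ≤ g (Int.fract x) := hw₂ hfr
    rw [← hgper x] at h4
    simp only [hg] at h4 ⊢
    linarith

lemma exists_fixed (F : ℝ → ℝ) (hF : Continuous F) (p : ℝ) (N : ℕ) (hN : 1 ≤ N)
    (hp : F^[N] p = p) : ∃ z, F z = z := by
  by_contra hno
  push_neg at hno
  have htri : (∀ w, w < F w) ∨ (∀ w, F w < w) := by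
    by_cases h1 : ∀ w, w < F w
    · exact Or.inl h1
    · push_neg at h1
      obtain ⟨w₀, hw₀⟩ := h1
      have hw₀' : F w₀ < w₀ := lt_of_le_of_ne hw₀ (hno w₀)
      refine Or.inr fun w => ?_
      by_contra hw
      push_neg at hw
      have hw' : w < F w := lt_of_le_of_ne hw (Ne.symm (hno w))
      -- IVT between w and w₀ gives a fixed point
      have hcont : Continuous (fun v => F v - v) := hF.sub continuous_id
      rcases le_or_gt w w₀ with hle | hlt
      · obtain ⟨ζ, _, hζ⟩ := intermediate_value_Icc' hle hcont.continuousOn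
          (⟨by simp; linarith, by simp; linarith⟩ : (0:ℝ) ∈ Icc (F w₀ - w₀) (F w - w))
        have : F ζ - ζ = 0 := hζ
        exact hno ζ (by linarith)
      · obtain ⟨ζ, _, hζ⟩ := intermediate_value_Icc hlt.le hcont.continuousOn
          (⟨by simp; linarith, by simp; linarith⟩ : (0:ℝ) ∈ Icc (F w₀ - w₀) (F w - w))
        have : F ζ - ζ = 0 := hζ
        exact hno ζ (by linarith)
  have key : ∀ (h : ∀ w, w < F w) (k : ℕ), 1 ≤ k → p < F^[k] p := by
    intro h k hk
    induction k with
    | zero => omega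
    | succ k ih =>
      rcases Nat.eq_or_lt_of_le hk with hk1 | hk2
      · simpa [← hk1] using h p
      · have hik := ih (by omega)
        calc p < F^[k] p := hik
        _ < F (F^[k] p) := h _
        _ = F^[k+1] p := (Function.iterate_succ_apply' F k p).symm
  have key' : ∀ (h : ∀ w, F w < w) (k : ℕ), 1 ≤ k → F^[k] p < p := by
    intro h k hk
    induction k with
    | zero => omega
    | succ k ih =>
      rcases Nat.eq_or_lt_of_le hk with hk1 | hk2
      · simpa [← hk1] using h p
      · have hik := ih (by omega)
        calc F^[k+1] p = F (F^[k] p) := Function.iterate_succ_apply' F k p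
        _ < F^[k] p := h _
        _ < p := hik
  rcases htri with h | h
  · have := key h N hN; rw [hp] at this; exact lt_irrefl p this
  · have := key' h N hN; rw [hp] at this; exact lt_irrefl p this

end PeriodsAux

namespace PeriodsAux

/-- Bundled structure for a degree-one lifting with a ℤ-invariant locally finite set of
periodic points crossing every level. -/
structure Ctx (F : ℝ → ℝ) : Type where
  X : Set ℝ
  N : ℕ
  hN : 1 ≤ N
  hper : ∀ p ∈ X, F^[N] p = p
  hFX : ∀ p ∈ X, F p ∈ X
  hfin : ∀ lo hi : ℝ, (X ∩ Set.Icc lo hi).Finite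
  hup : ∀ c, c ∉ X → ∃ u ∈ X, u < c ∧ c < F u
  hdn : ∀ c, c ∉ X → ∃ v ∈ X, c < v ∧ F v < c
  Tb : ℝ
  Sb : ℝ
  hTb : ∀ x : ℝ, F x ≤ x + Tb
  hSb : ∀ x : ℝ, x - Sb ≤ F x
  xne : X.Nonempty

variable {F : ℝ → ℝ}

lemma Ctx.gap_above (C : Ctx F) (t : ℝ) :
    ∃ ε, 0 < ε ∧ ∀ q ∈ C.X, ¬(t < q ∧ q < t + ε) := by
  classical
  set S := C.X ∩ Set.Ioc t (t+1) with hS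
  have hSfin : S.Finite := (C.hfin t (t+1)).subset (by
    intro q hq; exact ⟨hq.1, hq.2.1.le, hq.2.2⟩)
  rcases S.eq_empty_or_nonempty with hSe | hSne
  · refine ⟨1, one_pos, fun q hq hcon => ?_⟩
    have : q ∈ S := ⟨hq, hcon.1, by linarith [hcon.2]⟩
    rw [hSe] at this; exact this
  · set m := sInf S with hm
    have hmS : m ∈ S := hSne.csInf_mem hSfin
    have hmt : t < m := hmS.2.1
    refine ⟨min (m - t) 1, by simp [hmt], fun q hq hcon => ?_⟩
    have hq1 : q < t + 1 := lt_of_lt_of_le hcon.2 (by simp)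
    have hqS : q ∈ S := ⟨hq, hcon.1, by linarith⟩
    have h5 : m ≤ q := csInf_le hSfin.bddBelow hqS
    have h6 : min (m - t) 1 ≤ m - t := min_le_left _ _
    have := hcon.2
    linarith

lemma Ctx.gap_below (C : Ctx F) (t : ℝ) :
    ∃ ε, 0 < ε ∧ ∀ q ∈ C.X, ¬(t - ε < q ∧ q < t) := by
  classical
  set S := C.X ∩ Set.Ico (t-1) t with hS
  have hSfin : S.Finite := (C.hfin (t-1) t).subset (by
    intro q hq; exact ⟨hq.1, hq.2.1, hq.2.2.le⟩)
  rcases S.eq_empty_or_nonempty with hSe | hSne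
  · refine ⟨1, one_pos, fun q hq hcon => ?_⟩
    have : q ∈ S := ⟨hq, by linarith [hcon.1], hcon.2⟩
    rw [hSe] at this; exact this
  · set m := sSup S with hm
    have hmS : m ∈ S := hSne.csSup_mem hSfin
    have hmt : m < t := hmS.2.2
    refine ⟨min (t - m) 1, by simp [hmt], fun q hq hcon => ?_⟩
    have hq1 : t - 1 ≤ q := by
      have h2 := hcon.1
      have h3 : min (t-m) 1 ≤ 1 := min_le_right _ _
      linarith
    have hqS : q ∈ S := ⟨hq, hq1, hcon.2⟩
    have hle : q ≤ m := le_csSup hSfin.bddAbove hqS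
    have h4 : min (t-m) 1 ≤ t - m := min_le_left _ _
    have := hcon.1
    linarith

lemma Ctx.good_level (C : Ctx F) (a b : ℝ) (hab : a < b) :
    ∃ c, a < c ∧ c < b ∧ c ∉ C.X := by
  obtain ⟨ε, hε, hgap⟩ := C.gap_above a
  refine ⟨a + min ε (b - a) / 2, by
    have : 0 < min ε (b-a) := lt_min hε (by linarith)
    linarith, by
    have : min ε (b-a) ≤ b - a := min_le_right _ _
    linarith, fun hmem => ?_⟩
  have h1 : a < a + min ε (b-a) / 2 := by
    have : 0 < min ε (b-a) := lt_min hε (by linarith)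
    linarith
  have h2 : a + min ε (b-a) / 2 < a + ε := by
    have : min ε (b-a) ≤ ε := min_le_left _ _
    linarith
  exact hgap _ hmem ⟨h1, h2⟩

/-- The infimum of points above `z` mapped to or below `z`. -/
noncomputable def dz (F : ℝ → ℝ) (z : ℝ) : ℝ := sInf {w | z < w ∧ F w ≤ z}

lemma Ctx.down_jumper (C : Ctx F) (z : ℝ) (hz : F z = z) :
    ∃ v ∈ C.X, z < v ∧ F v ≤ z := by
  obtain ⟨ε, hε, hgap⟩ := C.gap_above z
  obtain ⟨c, hc1, hc2, hc3⟩ := C.good_level z (z + ε) (by linarith)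
  obtain ⟨v, hvX, hcv, hFvc⟩ := C.hdn c hc3
  refine ⟨v, hvX, lt_trans hc1 hcv, ?_⟩
  by_contra hcon
  push_neg at hcon
  exact hgap (F v) (C.hFX v hvX) ⟨hcon, by linarith⟩

lemma dzSet_nonempty (C : Ctx F) {z : ℝ} (hz : F z = z) :
    {w | z < w ∧ F w ≤ z}.Nonempty := by
  obtain ⟨v, _, hv1, hv2⟩ := C.down_jumper z hz
  exact ⟨v, hv1, hv2⟩

lemma dzSet_bddBelow {z : ℝ} : BddBelow {w | z < w ∧ F w ≤ z} := ⟨z, fun w hw => hw.1.le⟩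

lemma dz_ge (C : Ctx F) {z : ℝ} (hz : F z = z) : z ≤ dz F z :=
  le_csInf (dzSet_nonempty C hz) (fun w hw => hw.1.le)

lemma dz_le_mem {z w : ℝ} (hw : z < w) (hw2 : F w ≤ z) : dz F z ≤ w :=
  csInf_le dzSet_bddBelow ⟨hw, hw2⟩

lemma dz_bound (C : Ctx F) {z : ℝ} (hz : F z = z) : dz F z ≤ z + C.Sb := by
  obtain ⟨v, _, hv1, hv2⟩ := C.down_jumper z hz
  have := C.hSb v
  exact le_trans (dz_le_mem hv1 hv2) (by linarith)

lemma F_dz (C : Ctx F) {z : ℝ} (hz : F z = z) (hF : Continuous F) : F (dz F z) ≤ z := by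
  have h1 : dz F z ∈ closure {w | z < w ∧ F w ≤ z} :=
    csInf_mem_closure (dzSet_nonempty C hz) dzSet_bddBelow
  have h2 : closure {w | z < w ∧ F w ≤ z} ⊆ {w | F w ≤ z} := by
    have hsub : {w : ℝ | z < w ∧ F w ≤ z} ⊆ {w | F w ≤ z} := fun w hw => hw.2
    have hclosed : IsClosed {w : ℝ | F w ≤ z} := isClosed_le hF continuous_const
    calc closure {w | z < w ∧ F w ≤ z} ⊆ closure {w | F w ≤ z} := closure_mono hsub
    _ = {w | F w ≤ z} := hclosed.closure_eq
  exact h2 h1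

lemma dz_min {z w : ℝ} (hw : z < w) (hw2 : w < dz F z) : z < F w := by
  by_contra hcon
  push_neg at hcon
  exact absurd (dz_le_mem hw hcon) (not_le.2 hw2)

lemma dz_inv (C : Ctx F) {z : ℝ} (hz : F z = z) (hnc : ¬ LConf F) (hF : Continuous F)
    {w : ℝ} (hw : z < w) (hw2 : w < dz F z) : F w < dz F z := by
  by_contra hcon
  push_neg at hcon
  exact hnc ⟨z, w, dz F z, hw, hw2, le_of_eq hz |>.trans hw.le, hcon, F_dz C hz hF⟩

end PeriodsAux

namespace PeriodsAux

variable {F : ℝ → ℝ}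

lemma finite_argmax {s : Set ℝ} (hs : s.Finite) (hne : s.Nonempty) (f : ℝ → ℝ) :
    ∃ u ∈ s, ∀ w ∈ s, f w ≤ f u := by
  classical
  obtain ⟨u, huf, hmax⟩ := Finset.exists_max_image hs.toFinset f (by
    rwa [← Set.Finite.toFinset_nonempty hs] at hne)
  exact ⟨u, hs.mem_toFinset.1 huf, fun w hw => hmax w (hs.mem_toFinset.2 hw)⟩

/-- The union of all the invariant zones above fixed points. -/
def Vz (F : ℝ → ℝ) : Set ℝ := {t | ∃ z, F z = z ∧ z < t ∧ t < dz F z}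

/-- The key step: assuming no L-scheme, every fixed point lies in some zone. -/
lemma fix_mem_Vz (C : Ctx F) (hF : Continuous F) (hlift : ∀ x, F (x + 1) = F x + 1)
    (hnc : ¬ LConf F) {y : ℝ} (hy : F y = y) : y ∈ Vz F := by
  classical
  set d := dz F y with hd_def
  have hyd : y ≤ d := dz_ge C hy
  -- Step A: find u < y with d ≤ F u
  have stepA : ∃ u, u < y ∧ d ≤ F u := by
    rcases eq_or_lt_of_le hyd with hdeq | hdlt
    · -- degenerate case d = y
      obtain ⟨ε, hε, hgap⟩ := C.gap_below y
      set W := {w ∈ C.X | y - 1 - C.Tb ≤ w ∧ w ≤ y - ε} with hW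
      have hWfin : W.Finite := (C.hfin (y - 1 - C.Tb) (y - ε)).subset
        (fun w hw => ⟨hw.1, hw.2.1, hw.2.2⟩)
      have hcr : ∀ δ, 0 < δ → δ ≤ min 1 ε → ∃ u ∈ W, y - δ < F u := by
        intro δ hδ hδ'
        obtain ⟨c, hc1, hc2, hc3⟩ := C.good_level (y - δ) y (by linarith)
        obtain ⟨u, huX, huc, hcu⟩ := C.hup c hc3
        have hδ1 : δ ≤ 1 := le_trans hδ' (min_le_left _ _)
        have hδε : δ ≤ ε := le_trans hδ' (min_le_right _ _)
        have hub : y - 1 - C.Tb ≤ u := by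
          have := C.hTb u
          have : u ≥ F u - C.Tb := by linarith
          linarith
        have huε : u ≤ y - ε := by
          by_contra hcon
          push_neg at hcon
          exact hgap u huX ⟨hcon, lt_trans huc hc2⟩
        exact ⟨u, ⟨huX, hub, huε⟩, by linarith⟩
      have hWne : W.Nonempty := by
        obtain ⟨u, hu, _⟩ := hcr (min 1 ε) (by simp [hε]) le_rfl
        exact ⟨u, hu⟩
      obtain ⟨u, huW, hmax⟩ := finite_argmax hWfin hWne F
      refine ⟨u, by have := huW.2.2; linarith, ?_⟩
      rw [← hdeq]
      by_contra hcon
      push_neg at hcon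
      set δ := min (min 1 ε) (y - F u) with hδdef
      have hδpos : 0 < δ := lt_min (by simp [hε]) (by linarith)
      obtain ⟨u', hu'W, hu'⟩ := hcr δ hδpos (min_le_left _ _)
      have h1 : y - δ ≥ F u := by
        have : δ ≤ y - F u := min_le_right _ _
        linarith
      have := hmax u' hu'W
      linarith
    · -- main case d > y
      set η := min 1 (d - y) with hη_def
      have hηpos : 0 < η := lt_min one_pos (by linarith)
      set W := {w ∈ C.X | d - 1 - C.Tb ≤ w ∧ w < d} with hW
      have hWfin : W.Finite := (C.hfin (d - 1 - C.Tb) d).subset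
        (fun w hw => ⟨hw.1, hw.2.1, hw.2.2.le⟩)
      have hcr : ∀ δ, 0 < δ → δ ≤ η → ∃ u ∈ W, d - δ < F u := by
        intro δ hδ hδ'
        obtain ⟨c, hc1, hc2, hc3⟩ := C.good_level (d - δ) d (by linarith)
        obtain ⟨u, huX, huc, hcu⟩ := C.hup c hc3
        have hδ1 : δ ≤ 1 := le_trans hδ' (min_le_left _ _)
        have hub : d - 1 - C.Tb ≤ u := by
          have := C.hTb u
          linarith
        exact ⟨u, ⟨huX, hub, lt_trans huc hc2⟩, by linarith⟩
      have hWne : W.Nonempty := by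
        obtain ⟨u, hu, _⟩ := hcr η hηpos le_rfl
        exact ⟨u, hu⟩
      obtain ⟨u, huW, hmax⟩ := finite_argmax hWfin hWne F
      have hFu : d ≤ F u := by
        by_contra hcon
        push_neg at hcon
        set δ := min η (d - F u) with hδdef
        have hδpos : 0 < δ := lt_min hηpos (by linarith)
        obtain ⟨u', hu'W, hu'⟩ := hcr δ hδpos (min_le_left _ _)
        have h1 : d - δ ≥ F u := by
          have : δ ≤ d - F u := min_le_right _ _
          linarith
        have := hmax u' hu'W
        linarith
      refine ⟨u, ?_, hFu⟩
      -- u < y : u cannot be in (y, d) by dz_inv, cannot be y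
      rcases lt_trichotomy u y with h | h | h
      · exact h
      · exfalso
        rw [h, hy] at hFu
        linarith
      · exfalso
        have := dz_inv C hy hnc hF h huW.2.2
        rw [← hd_def] at this
        linarith
  obtain ⟨u, huy, hdFu⟩ := stepA
  have hFuu : u < F u := by linarith
  -- Step C: the largest fixed point below u
  set Sstar := {w | F w = w ∧ w ≤ u} with hSstar
  have hSclosed : IsClosed Sstar := by
    have : Sstar = {w | F w = w} ∩ Set.Iic u := rfl
    rw [this]
    exact (isClosed_eq hF continuous_id).inter isClosed_Iic
  have hSne : Sstar.Nonempty := by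
    refine ⟨y + (⌊u - y⌋ : ℤ), ?_, ?_⟩
    · rw [lift_int F hlift, hy]
    · have := Int.floor_le (u - y)
      linarith
  have hSbdd : BddAbove Sstar := ⟨u, fun w hw => hw.2⟩
  set zs := sSup Sstar with hzs
  have hzsS : zs ∈ Sstar := hSclosed.csSup_mem hSne hSbdd
  have hzsfix : F zs = zs := hzsS.1
  have hzsu : zs ≤ u := hzsS.2
  have hzsu' : zs < u := by
    rcases eq_or_lt_of_le hzsu with h | h
    · exfalso; rw [h] at hzsfix; linarith
    · exact h
  -- Step D: F > id on (zs, u]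
  have stepD : ∀ w, zs < w → w ≤ u → w < F w := by
    intro w hw1 hw2
    by_contra hcon
    push_neg at hcon
    rcases eq_or_lt_of_le hcon with h | h
    · have : w ∈ Sstar := ⟨h, hw2⟩
      exact absurd (le_csSup hSbdd this) (not_le.2 hw1)
    · have hcont : Continuous (fun v => F v - v) := hF.sub continuous_id
      obtain ⟨ζ, hζmem, hζ⟩ := intermediate_value_Icc hw2 hcont.continuousOn
        (⟨by simp; linarith, by simp; linarith⟩ : (0:ℝ) ∈ Icc (F w - w) (F u - u))
      have hζfix : F ζ = ζ := by have : F ζ - ζ = 0 := hζ; linarith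
      have : ζ ∈ Sstar := ⟨hζfix, hζmem.2⟩
      have := le_csSup hSbdd this
      have := hζmem.1
      linarith
  -- Step E: u < dz F zs
  have stepE : u < dz F zs := by
    have h1 : u ≤ dz F zs := by
      apply le_csInf (dzSet_nonempty C hzsfix)
      intro w hw
      by_contra hcon
      push_neg at hcon
      have h5 := stepD w hw.1 hcon.le
      have h6 := hw.2
      have h7 := hw.1
      linarith
    rcases eq_or_lt_of_le h1 with h | h
    · exfalso
      have := F_dz C hzsfix hF
      rw [← h] at this
      have := stepD u hzsu' le_rfl
      linarith
    · exact h
  -- Step F: conclude y ∈ Vz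
  have hFu_lt : F u < dz F zs := dz_inv C hzsfix hnc hF hzsu' stepE
  exact ⟨zs, hzsfix, lt_of_le_of_lt hzsu huy, by linarith⟩

end PeriodsAux

namespace PeriodsAux

variable {F : ℝ → ℝ}

lemma trap (C : Ctx F) (hF : Continuous F) (hnc : ¬ LConf F) {z : ℝ} (hz : F z = z)
    {w : ℝ} (hw : z < w ∧ w < dz F z) :
    ∀ k, z < F^[k] w ∧ F^[k] w < dz F z := by
  intro k
  induction k with
  | zero => simpa using hw
  | succ k ih =>
    rw [Function.iterate_succ_apply']
    exact ⟨dz_min ih.1 ih.2, dz_inv C hz hnc hF ih.1 ih.2⟩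

lemma cyclic_cross_up (F : ℝ → ℝ) (N : ℕ) (hN : 1 ≤ N) (ξ : ℝ) (hξ : F^[N] ξ = ξ)
    (c : ℝ) (hc : F c = c) (a b : ℕ) (ha : F^[a] ξ < c) (hb : c < F^[b] ξ) :
    ∃ k, F^[k] ξ < c ∧ c < F^[k+1] ξ := by
  classical
  have hnoc : ∀ k, F^[k] ξ ≠ c := by
    intro k hk
    have hconst : ∀ j, F^[k + j] ξ = c := by
      intro j
      induction j with
      | zero => simpa using hk
      | succ j ih =>
        rw [show k + (j+1) = (k+j) + 1 by ring, Function.iterate_succ_apply', ih, hc]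
    have h1 : F^[N * (k+1)] ξ = ξ := by
      have hp : Function.IsPeriodicPt F N ξ := hξ
      exact (hp.mul_const (k+1))
    have hkle : k ≤ N * (k+1) := by
      calc k ≤ k + 1 := by omega
      _ ≤ N * (k+1) := Nat.le_mul_of_pos_left (k+1) (by omega)
    have h2 : k + (N * (k+1) - k) = N * (k+1) := by omega
    have h3 := hconst (N * (k+1) - k)
    rw [h2, h1] at h3
    rw [h3] at ha
    rw [fix_iter F hc a] at ha
    exact lt_irrefl c ha
  have hex : ∃ m, a ≤ m ∧ c < F^[m] ξ := by
    refine ⟨b + N * a, ?_, ?_⟩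
    · have : a ≤ N * a := Nat.le_mul_of_pos_left a (by omega)
      omega
    · have hp : Function.IsPeriodicPt F N ξ := hξ
      have h2 : F^[N * a] ξ = ξ := hp.mul_const a
      have h1 : F^[b + N * a] ξ = F^[b] ξ := by
        rw [Function.iterate_add_apply, h2]
      rw [h1]; exact hb
  haveI : DecidablePred fun k => a ≤ k ∧ c < F^[k] ξ := fun k => Classical.dec _
  have hexP' : ∃ m, a ≤ m ∧ c < F^[m] ξ := hex
  obtain ⟨hPk0a, hPk0b⟩ := Nat.find_spec hexP'
  have hk0a : a < Nat.find hexP' := by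
    rcases eq_or_lt_of_le hPk0a with h | h
    · exfalso; rw [← h] at hPk0b; exact absurd hPk0b (not_lt.2 ha.le)
    · exact h
  refine ⟨Nat.find hexP' - 1, ?_, ?_⟩
  · have hlt : Nat.find hexP' - 1 < Nat.find hexP' := by omega
    have hnP := Nat.find_min hexP' hlt
    push_neg at hnP
    exact lt_of_le_of_ne (hnP (by omega)) (hnoc _)
  · have h : Nat.find hexP' - 1 + 1 = Nat.find hexP' := by omega
    rw [h]; exact hPk0b

lemma recursion_step (C : Ctx F) (hF : Continuous F) (hnc : ¬ LConf F)
    (hall : ∀ t : ℝ, t ∈ Vz F) {z1 : ℝ} (hz1 : F z1 = z1) :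
    ∃ z2, F z2 = z2 ∧ z2 < z1 ∧ dz F z1 ≤ dz F z2 ∧
      ∃ w, z2 < w ∧ w < z1 ∧ dz F z1 ≤ F w := by
  obtain ⟨v, hvX, hzv, hFv⟩ := C.down_jumper z1 hz1
  have hvper : F^[C.N] v = v := C.hper v hvX
  have hFvlt : F v < z1 := by
    rcases eq_or_lt_of_le hFv with h | h
    · exfalso
      have hconst : ∀ j, 1 ≤ j → F^[j] v = z1 := by
        intro j hj
        induction j with
        | zero => omega
        | succ j ih =>
          rcases Nat.eq_or_lt_of_le hj with h1 | h1
          · rw [← h1]; simpa using h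
          · rw [Function.iterate_succ_apply', ih (by omega), hz1]
      have h2 := hconst C.N C.hN
      rw [hvper] at h2
      rw [h2] at hzv
      exact lt_irrefl z1 hzv
    · exact h
  have havoid : ∀ k, ¬ (z1 < F^[k] v ∧ F^[k] v < dz F z1) := by
    intro k hk
    have htrapk := trap C hF hnc hz1 hk
    have hN' := C.hN
    have hkle : k ≤ k * C.N := Nat.le_mul_of_pos_right k (by omega)
    set jj := 1 + k * C.N - k with hjj
    have hj : jj + k = 1 + k * C.N := by omega
    have hper2 : F^[k * C.N] v = v := by
      have hp : Function.IsPeriodicPt F C.N v := hvper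
      have := hp.mul_const k
      rwa [mul_comm] at this
    have h1 : F^[jj + k] v = F v := by
      rw [hj, Function.iterate_add_apply, hper2, Function.iterate_one]
    have h2 := (htrapk jj).1
    rw [← Function.iterate_add_apply, h1] at h2
    linarith
  have hvge : dz F z1 ≤ v := by
    have h0 := havoid 0
    simp only [Function.iterate_zero_apply] at h0
    by_contra hcon
    push_neg at hcon
    exact h0 ⟨hzv, hcon⟩
  obtain ⟨z2, hz2fix, hz2v, hvdz2⟩ := hall v
  have htrap2 : ∀ k, z2 < F^[k] v ∧ F^[k] v < dz F z2 := trap C hF hnc hz2fix ⟨hz2v, hvdz2⟩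
  have hz2z1 : z2 < z1 := by
    have h1 := (htrap2 1).1
    simp only [Function.iterate_one] at h1
    linarith
  have hdzmono : dz F z1 ≤ dz F z2 := le_trans hvge hvdz2.le
  obtain ⟨k, hk1, hk2⟩ := cyclic_cross_up F C.N C.hN v hvper z1 hz1 1 0
    (by simpa using hFvlt) (by simpa using hzv)
  refine ⟨z2, hz2fix, hz2z1, hdzmono, F^[k] v, (htrap2 k).1, hk1, ?_⟩
  have h5 := havoid (k+1)
  have h6 : F (F^[k] v) = F^[k+1] v := (Function.iterate_succ_apply' F k v).symm
  rw [h6]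
  by_contra hcon
  push_neg at hcon
  exact h5 ⟨hk2, hcon⟩

end PeriodsAux

namespace PeriodsAux

variable {F : ℝ → ℝ}

lemma machine (C : Ctx F) (hF : Continuous F) (hlift : ∀ x, F (x+1) = F x + 1) :
    LConf F := by
  classical
  by_contra hnc
  obtain ⟨p, hpX⟩ := C.xne
  obtain ⟨z, hz⟩ := exists_fixed F hF p C.N C.hN (C.hper p hpX)
  have hVopen : IsOpen (Vz F) := by
    have hVeq : Vz F = ⋃ (z' : ℝ) (_ : F z' = z'), Set.Ioo z' (dz F z') := by
      ext t
      simp only [Vz, Set.mem_iUnion, Set.mem_Ioo, Set.mem_setOf_eq]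
      constructor
      · rintro ⟨z', h1, h2, h3⟩; exact ⟨z', h1, h2, h3⟩
      · rintro ⟨z', h1, h2, h3⟩; exact ⟨z', h1, h2, h3⟩
    rw [hVeq]
    exact isOpen_iUnion (fun z' => isOpen_iUnion (fun _ => isOpen_Ioo))
  have hzV : z ∈ Vz F := fix_mem_Vz C hF hlift hnc hz
  have part1 : ∀ t, t ≤ z → t ∈ Vz F := by
    by_contra hcon
    push_neg at hcon
    obtain ⟨t₀, ht₀z, ht₀V⟩ := hcon
    set S := {t | t ≤ z ∧ t ∉ Vz F} with hS
    have hSne : S.Nonempty := ⟨t₀, ht₀z, ht₀V⟩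
    have hSclosed : IsClosed S := by
      have : S = Set.Iic z ∩ (Vz F)ᶜ := rfl
      rw [this]; exact isClosed_Iic.inter hVopen.isClosed_compl
    have hSbdd : BddAbove S := ⟨z, fun w hw => hw.1⟩
    set A1 := sSup S with hA1
    have hA1S : A1 ∈ S := hSclosed.csSup_mem hSne hSbdd
    have hA1z : A1 ≤ z := hA1S.1
    have hA1V : A1 ∉ Vz F := hA1S.2
    have hA1z' : A1 < z := lt_of_le_of_ne hA1z (by
      intro heq
      rw [heq] at hA1V
      exact hA1V hzV)
    have hA1fix : F A1 = A1 := by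
      have hcl : IsClosed {w : ℝ | F w = w} := isClosed_eq hF continuous_id
      have hclosure : A1 ∈ closure {w : ℝ | F w = w} := by
        rw [Metric.mem_closure_iff]
        intro ε hε
        set t := A1 + min (ε/2) ((z - A1)/2) with ht
        have hmin : 0 < min (ε/2) ((z - A1)/2) := lt_min (by linarith) (by linarith)
        have htz : t ≤ z := by
          have : min (ε/2) ((z-A1)/2) ≤ (z - A1)/2 := min_le_right _ _
          simp only [ht]; linarith
        have htA1 : A1 < t := by simp only [ht]; linarith
        have htV : t ∈ Vz F := by
          by_contra hcon2
          have : t ∈ S := ⟨htz, hcon2⟩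
          exact absurd (le_csSup hSbdd this) (not_le.2 htA1)
        obtain ⟨z1, hz1fix, hz1t, htdz⟩ := htV
        have hz1A1 : A1 ≤ z1 := by
          by_contra hcon3
          push_neg at hcon3
          exact hA1V ⟨z1, hz1fix, hcon3, lt_trans htA1 htdz⟩
        refine ⟨z1, hz1fix, ?_⟩
        rw [Real.dist_eq, abs_sub_lt_iff]
        have hm2 : min (ε/2) ((z-A1)/2) ≤ ε/2 := min_le_left _ _
        constructor
        · linarith
        · have : z1 < t := hz1t
          simp only [ht] at this
          linarith
      rw [hcl.closure_eq] at hclosure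
      exact hclosure
    exact hA1V (fix_mem_Vz C hF hlift hnc hA1fix)
  by_cases hNV : ∃ t, z ≤ t ∧ t ∉ Vz F
  · -- finite ceiling B1
    obtain ⟨t₁, ht₁⟩ := hNV
    set NVs := {t | z ≤ t ∧ t ∉ Vz F} with hNVs
    have hNVne : NVs.Nonempty := ⟨t₁, ht₁⟩
    have hNVclosed : IsClosed NVs := by
      have : NVs = Set.Ici z ∩ (Vz F)ᶜ := rfl
      rw [this]; exact isClosed_Ici.inter hVopen.isClosed_compl
    have hNVbdd : BddBelow NVs := ⟨z, fun w hw => hw.1⟩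
    set B1 := sInf NVs with hB1
    have hB1S : B1 ∈ NVs := hNVclosed.csInf_mem hNVne hNVbdd
    have hB1V : B1 ∉ Vz F := hB1S.2
    have hzB1 : z ≤ B1 := hB1S.1
    have allV : ∀ t, t < B1 → t ∈ Vz F := by
      intro t htB
      rcases le_or_gt t z with h | h
      · exact part1 t h
      · by_contra hcon
        have : t ∈ NVs := ⟨h.le, hcon⟩
        exact absurd (csInf_le hNVbdd this) (not_le.2 htB)
    have Finv : ∀ t, t < B1 → F t < B1 := by
      intro t htB
      obtain ⟨z1, hz1fix, hz1t, htdz⟩ := allV t htB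
      have hdzB1 : dz F z1 ≤ B1 := by
        by_contra hcon
        push_neg at hcon
        exact hB1V ⟨z1, hz1fix, lt_trans hz1t htB, hcon⟩
      have := dz_inv C hz1fix hnc hF hz1t htdz
      linarith
    have hFB1 : F B1 ≤ B1 := by
      by_contra hcon
      push_neg at hcon
      have hopen : IsOpen {w : ℝ | B1 < F w} := isOpen_lt continuous_const hF
      rcases Metric.isOpen_iff.1 hopen B1 hcon with ⟨δ, hδ, hball⟩
      have hm : B1 - δ/2 ∈ Metric.ball B1 δ := by
        rw [Metric.mem_ball, Real.dist_eq, abs_sub_lt_iff]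
        constructor <;> linarith
      have h2 : B1 < F (B1 - δ/2) := hball hm
      have h3 := Finv (B1 - δ/2) (by linarith)
      linarith
    obtain ⟨ε, hε, hgap⟩ := C.gap_above B1
    obtain ⟨c, hc1, hc2, hc3⟩ := C.good_level B1 (B1 + ε) (by linarith)
    obtain ⟨u, huX, huc, hcu⟩ := C.hup c hc3
    have huB1 : u ≤ B1 := by
      by_contra hcon
      push_neg at hcon
      exact hgap u huX ⟨hcon, lt_trans huc hc2⟩
    rcases eq_or_lt_of_le huB1 with h | h
    · rw [h] at hcu
      linarith
    · have := Finv u h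
      linarith
  · -- every point is in Vz : descending recursion
    push_neg at hNV
    have hall : ∀ t : ℝ, t ∈ Vz F := by
      intro t
      rcases le_or_gt t z with h | h
      · exact part1 t h
      · exact hNV t h.le
    obtain ⟨z0, hz0fix, hz0z, hzdz0⟩ := hzV
    set d0 := dz F z0 with hd0
    have hstep : ∀ z1 : ℝ, F z1 = z1 → ∃ z2, F z2 = z2 ∧ z2 < z1 ∧ dz F z1 ≤ dz F z2 ∧
        ∃ w, z2 < w ∧ w < z1 ∧ dz F z1 ≤ F w :=
      fun z1 h => recursion_step C hF hnc hall h
    let T : ℕ → {w : ℝ // F w = w} := fun n => Nat.rec ⟨z0, hz0fix⟩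
      (fun _ q => ⟨Classical.choose (hstep q.1 q.2), (Classical.choose_spec (hstep q.1 q.2)).1⟩) n
    have hT0 : (T 0).1 = z0 := rfl
    have hTsucc : ∀ n, (T (n+1)).1 = Classical.choose (hstep (T n).1 (T n).2) := fun n => rfl
    have hspec : ∀ n, (T (n+1)).1 < (T n).1 ∧ dz F (T n).1 ≤ dz F (T (n+1)).1 ∧
        ∃ w, (T (n+1)).1 < w ∧ w < (T n).1 ∧ dz F (T n).1 ≤ F w := by
      intro n
      have h := Classical.choose_spec (hstep (T n).1 (T n).2)
      rw [← hTsucc n] at h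
      exact ⟨h.2.1, h.2.2.1, h.2.2.2⟩
    have hdmono : ∀ n, d0 ≤ dz F (T n).1 := by
      intro n
      induction n with
      | zero => rw [hT0]
      | succ n ih => exact le_trans ih (hspec n).2.1
    have hbdd : ∀ n, d0 - C.Sb ≤ (T n).1 := by
      intro n
      have h1 := dz_bound C (T n).2
      have h2 := hdmono n
      linarith
    set zseq : ℕ → ℝ := fun n => (T n).1 with hzseq
    have hanti : ∀ n, zseq (n+1) < zseq n := fun n => (hspec n).1
    have hmono : Antitone zseq := antitone_nat_of_succ_le (fun n => (hanti n).le)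
    have hrangebdd : BddBelow (Set.range zseq) := ⟨d0 - C.Sb, by
      rintro w ⟨n, rfl⟩; exact hbdd n⟩
    set ζ := ⨅ n, zseq n with hζ
    have hten : Filter.Tendsto zseq Filter.atTop (nhds ζ) :=
      tendsto_atTop_ciInf hmono hrangebdd
    have hζfix : F ζ = ζ := by
      have h1 : Filter.Tendsto (fun n => F (zseq n)) Filter.atTop (nhds (F ζ)) :=
        (hF.tendsto ζ).comp hten
      have h2 : (fun n => F (zseq n)) = zseq := funext (fun n => (T n).2)
      rw [h2] at h1
      exact tendsto_nhds_unique h1 hten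
    set wseq : ℕ → ℝ := fun n => Classical.choose (hspec n).2.2 with hwseq
    have hwspec : ∀ n, zseq (n+1) < wseq n ∧ wseq n < zseq n ∧ dz F (zseq n) ≤ F (wseq n) :=
      fun n => Classical.choose_spec (hspec n).2.2
    have hten1 : Filter.Tendsto (fun n => zseq (n+1)) Filter.atTop (nhds ζ) :=
      hten.comp (Filter.tendsto_add_atTop_nat 1)
    have hwten : Filter.Tendsto wseq Filter.atTop (nhds ζ) := by
      apply tendsto_of_tendsto_of_tendsto_of_le_of_le hten1 hten
      · intro n; exact (hwspec n).1.le
      · intro n; exact (hwspec n).2.1.le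
    have hFwge : ∀ n, d0 ≤ F (wseq n) := fun n => le_trans (hdmono n) (hwspec n).2.2
    have hFζ : d0 ≤ F ζ := by
      have h1 : Filter.Tendsto (fun n => F (wseq n)) Filter.atTop (nhds (F ζ)) :=
        (hF.tendsto ζ).comp hwten
      exact ge_of_tendsto h1 (Filter.Eventually.of_forall hFwge)
    have hζle : ζ ≤ zseq 1 := ciInf_le hrangebdd 1
    have h1 : zseq 1 < z0 := by
      have := hanti 0
      rwa [show zseq 0 = z0 from hT0] at this
    rw [hζfix] at hFζ
    have : z0 < d0 := lt_trans hz0z hzdz0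
    linarith

end PeriodsAux

namespace PeriodsAux

lemma cyclic_cross_up' (F : ℝ → ℝ) (N : ℕ) (hN : 1 ≤ N) (ξ : ℝ) (hξ : F^[N] ξ = ξ)
    (c : ℝ) (hnoc : ∀ k, F^[k] ξ ≠ c) (a b : ℕ) (ha : F^[a] ξ < c) (hb : c < F^[b] ξ) :
    ∃ k, F^[k] ξ < c ∧ c < F^[k+1] ξ := by
  classical
  have hex : ∃ m, a ≤ m ∧ c < F^[m] ξ := by
    refine ⟨b + N * a, ?_, ?_⟩
    · have : a ≤ N * a := Nat.le_mul_of_pos_left a (by omega)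
      omega
    · have hp : Function.IsPeriodicPt F N ξ := hξ
      have h2 : F^[N * a] ξ = ξ := hp.mul_const a
      rw [Function.iterate_add_apply, h2]; exact hb
  haveI : DecidablePred fun k => a ≤ k ∧ c < F^[k] ξ := fun k => Classical.dec _
  have hexP' : ∃ m, a ≤ m ∧ c < F^[m] ξ := hex
  obtain ⟨hPk0a, hPk0b⟩ := Nat.find_spec hexP'
  have hk0a : a < Nat.find hexP' := by
    rcases eq_or_lt_of_le hPk0a with h | h
    · exfalso; rw [← h] at hPk0b; exact absurd hPk0b (not_lt.2 ha.le)
    · exact h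
  refine ⟨Nat.find hexP' - 1, ?_, ?_⟩
  · have hlt : Nat.find hexP' - 1 < Nat.find hexP' := by omega
    have hnP := Nat.find_min hexP' hlt
    push_neg at hnP
    exact lt_of_le_of_ne (hnP (by omega)) (hnoc _)
  · have h : Nat.find hexP' - 1 + 1 = Nat.find hexP' := by omega
    rw [h]; exact hPk0b

lemma cyclic_cross_dn' (F : ℝ → ℝ) (N : ℕ) (hN : 1 ≤ N) (ξ : ℝ) (hξ : F^[N] ξ = ξ)
    (c : ℝ) (hnoc : ∀ k, F^[k] ξ ≠ c) (a b : ℕ) (ha : c < F^[a] ξ) (hb : F^[b] ξ < c) :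
    ∃ k, c < F^[k] ξ ∧ F^[k+1] ξ < c := by
  classical
  have hex : ∃ m, a ≤ m ∧ F^[m] ξ < c := by
    refine ⟨b + N * a, ?_, ?_⟩
    · have : a ≤ N * a := Nat.le_mul_of_pos_left a (by omega)
      omega
    · have hp : Function.IsPeriodicPt F N ξ := hξ
      have h2 : F^[N * a] ξ = ξ := hp.mul_const a
      rw [Function.iterate_add_apply, h2]; exact hb
  haveI : DecidablePred fun k => a ≤ k ∧ F^[k] ξ < c := fun k => Classical.dec _
  have hexP' : ∃ m, a ≤ m ∧ F^[m] ξ < c := hex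
  obtain ⟨hPk0a, hPk0b⟩ := Nat.find_spec hexP'
  have hk0a : a < Nat.find hexP' := by
    rcases eq_or_lt_of_le hPk0a with h | h
    · exfalso; rw [← h] at hPk0b; exact absurd hPk0b (not_lt.2 ha.le)
    · exact h
  refine ⟨Nat.find hexP' - 1, ?_, ?_⟩
  · have hlt : Nat.find hexP' - 1 < Nat.find hexP' := by omega
    have hnP := Nat.find_min hexP' hlt
    push_neg at hnP
    have := hnP (by omega)
    exact lt_of_le_of_ne this (Ne.symm (hnoc _))
  · have h : Nat.find hexP' - 1 + 1 = Nat.find hexP' := by omega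
    rw [h]; exact hPk0b

end PeriodsAux

/-- `x` is a periodic point of `F` of exact period `m`. -/
def HasExactPeriod (F : ℝ → ℝ) (m : ℕ) (x : ℝ) : Prop :=
  F^[m] x = x ∧ ∀ i, 1 ≤ i → i < m → F^[i] x ≠ x

open PeriodsAux in
/-- If `F` is a lifting of a degree one circle map having periodic orbits
`P₁, …, P_j` whose convex hulls have a connected union of diameter larger than `1`,
then `F` has periodic points of all exact periods. -/
theorem periods_of_connected_union_of_hulls_of_large_diameter
    (F : ℝ → ℝ) (hF : Continuous F)
    (hlift : ∀ x, F (x + 1) = F x + 1)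
    (j : ℕ) (hj : 1 ≤ j) (x : Fin j → ℝ) (n : Fin j → ℕ)
    (hn : ∀ i, 1 ≤ n i) (hper : ∀ i, F^[n i] (x i) = x i)
    (hconn : IsConnected (⋃ i : Fin j,
      Set.Icc (sInf (Set.range fun k : ℕ => F^[k] (x i)))
              (sSup (Set.range fun k : ℕ => F^[k] (x i)))))
    (hdiam : Metric.diam (⋃ i : Fin j,
      Set.Icc (sInf (Set.range fun k : ℕ => F^[k] (x i)))
              (sSup (Set.range fun k : ℕ => F^[k] (x i)))) > 1) :
    ∀ m : ℕ, 1 ≤ m → ∃ y : ℝ, HasExactPeriod F m y := by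
  classical
  haveI hnemp : Nonempty (Fin j) := ⟨⟨0, hj⟩⟩
  set rng : Fin j → Set ℝ := fun i => Set.range (fun k : ℕ => F^[k] (x i)) with hrng
  set N := Finset.univ.prod n with hNdef
  have hNpos : 0 < N := Finset.prod_pos (fun i _ => hn i)
  have hNper : ∀ i, F^[N] (x i) = x i := by
    intro i
    exact (show Function.IsPeriodicPt F (n i) (x i) from hper i).trans_dvd
      (Finset.dvd_prod_of_mem n (Finset.mem_univ i))
  have hmod : ∀ (i : Fin j) (k : ℕ), F^[k] (x i) = F^[k % N] (x i) := by
    intro i k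
    conv_lhs => rw [← Nat.mod_add_div k N, Function.iterate_add_apply]
    rw [((show Function.IsPeriodicPt F N (x i) from hNper i).mul_const (k / N)).eq]
  set P₀ : Finset ℝ := Finset.image (fun p : Fin j × ℕ => F^[p.2] (x p.1))
      (Finset.univ ×ˢ Finset.range N) with hP₀
  have hrngsub : ∀ i, rng i ⊆ ↑P₀ := by
    intro i q hq
    obtain ⟨k, rfl⟩ := hq
    show F^[k] (x i) ∈ ↑P₀
    rw [hmod i k]
    apply Finset.mem_coe.2
    apply Finset.mem_image.2
    refine ⟨(i, k % N), ?_, rfl⟩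
    simp [Finset.mem_product, Nat.mod_lt k hNpos]
  have hrngfin : ∀ i, (rng i).Finite := fun i => P₀.finite_toSet.subset (hrngsub i)
  have hrngne : ∀ i, (rng i).Nonempty := fun i => ⟨x i, 0, by simp⟩
  have hamem : ∀ i, sInf (rng i) ∈ rng i := fun i => (hrngne i).csInf_mem (hrngfin i)
  have hbmem : ∀ i, sSup (rng i) ∈ rng i := fun i => (hrngne i).csSup_mem (hrngfin i)
  have hale : ∀ i q, q ∈ rng i → sInf (rng i) ≤ q :=
    fun i q hq => csInf_le (hrngfin i).bddBelow hq
  have hble : ∀ i q, q ∈ rng i → q ≤ sSup (rng i) :=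
    fun i q hq => le_csSup (hrngfin i).bddAbove hq
  have hab : ∀ i, sInf (rng i) ≤ sSup (rng i) := fun i => hale i _ (hbmem i)
  obtain ⟨i₀, -, hi₀⟩ := Finset.exists_min_image Finset.univ (fun i => sInf (rng i))
    ⟨Classical.arbitrary _, Finset.mem_univ _⟩
  obtain ⟨i₁, -, hi₁⟩ := Finset.exists_max_image Finset.univ (fun i => sSup (rng i))
    ⟨Classical.arbitrary _, Finset.mem_univ _⟩
  set A := sInf (rng i₀) with hA
  set B := sSup (rng i₁) with hB
  set U := ⋃ i : Fin j, Set.Icc (sInf (rng i)) (sSup (rng i)) with hU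
  have hUsub : U ⊆ Set.Icc A B := by
    intro q hq
    obtain ⟨i, hi⟩ := Set.mem_iUnion.1 hq
    exact ⟨le_trans (hi₀ i (Finset.mem_univ i)) hi.1, le_trans hi.2 (hi₁ i (Finset.mem_univ i))⟩
  have hAmem : A ∈ U := Set.mem_iUnion.2 ⟨i₀, le_refl _, hab i₀⟩
  have hBmem : B ∈ U := Set.mem_iUnion.2 ⟨i₁, hab i₁, le_refl _⟩
  have hIccsub : Set.Icc A B ⊆ U := hconn.isPreconnected.Icc_subset hAmem hBmem
  have hAB : A ≤ B := (hUsub hAmem).2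
  have hBA : 1 < B - A := by
    have hUeq : U = Set.Icc A B := Set.Subset.antisymm hUsub hIccsub
    rw [hUeq, Real.diam_Icc hAB] at hdiam
    exact hdiam
  set X : Set ℝ := {q : ℝ | ∃ (i : Fin j) (k : ℕ) (l : ℤ), q = F^[k] (x i) + l} with hX
  have hxiX : ∀ (i : Fin j) (k : ℕ), F^[k] (x i) ∈ X := by
    intro i k; exact ⟨i, k, 0, by simp⟩
  have hXmem_rng : ∀ (i : Fin j) (q : ℝ), q ∈ rng i → q ∈ X := by
    intro i q hq; obtain ⟨k, rfl⟩ := hq; exact hxiX i k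
  have hFX : ∀ p ∈ X, F p ∈ X := by
    rintro p ⟨i, k, l, rfl⟩
    refine ⟨i, k+1, l, ?_⟩
    rw [lift_int F hlift, Function.iterate_succ_apply']
  have hXper : ∀ p ∈ X, F^[N] p = p := by
    rintro p ⟨i, k, l, rfl⟩
    rw [iter_lift_int F hlift]
    congr 1
    rw [← Function.iterate_add_apply, show N + k = k + N by ring,
      Function.iterate_add_apply, hNper i]
  have hXfin : ∀ lo hi : ℝ, (X ∩ Set.Icc lo hi).Finite := by
    intro lo hi
    have hbig : (⋃ p ∈ (↑P₀ : Set ℝ), (fun l : ℤ => p + l) ''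
        (Set.Icc ⌈lo - p⌉ ⌊hi - p⌋)).Finite :=
      Set.Finite.biUnion P₀.finite_toSet (fun p _ => (Set.finite_Icc _ _).image _)
    apply hbig.subset
    rintro q ⟨⟨i, k, l, rfl⟩, hq2⟩
    have hpP : F^[k] (x i) ∈ (↑P₀ : Set ℝ) := hrngsub i ⟨k, rfl⟩
    apply Set.mem_biUnion hpP
    refine ⟨l, ?_, rfl⟩
    simp only [Set.mem_Icc]
    constructor
    · apply Int.ceil_le.2
      have := hq2.1
      linarith
    · apply Int.le_floor.2
      have := hq2.2
      linarith
  have hnocX : ∀ (i : Fin j) (c' : ℝ), c' ∉ X → ∀ k, F^[k] (x i) ≠ c' := by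
    intro i c' hc' k hk
    exact hc' (hk ▸ hxiX i k)
  have hcover : ∀ c' : ℝ, A ≤ c' → c' ≤ B →
      ∃ i, sInf (rng i) ≤ c' ∧ c' ≤ sSup (rng i) := by
    intro c' h1 h2
    have := hIccsub ⟨h1, h2⟩
    obtain ⟨i, hi⟩ := Set.mem_iUnion.1 this
    exact ⟨i, hi.1, hi.2⟩
  have hshift : ∀ c : ℝ, c ∉ X → ∃ (i : Fin j) (l : ℤ),
      sInf (rng i) < c - l ∧ c - l < sSup (rng i) ∧ (c - l) ∉ X ∧ c = (c - l) + l := by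
    intro c hc
    have h1 : A ≤ c - ⌊c - A⌋ := by
      have := Int.floor_le (c - A); linarith
    have h2 : c - ⌊c - A⌋ < A + 1 := by
      have := Int.lt_floor_add_one (c - A); linarith
    have h3 : c - ⌊c - A⌋ ≤ B := by linarith
    have hcl : (c - (⌊c - A⌋ : ℤ)) ∉ X := by
      rintro ⟨i, k, l', hl'⟩
      apply hc
      refine ⟨i, k, l' + ⌊c - A⌋, ?_⟩
      push_cast
      linarith [hl']
    obtain ⟨i, hia, hib⟩ := hcover (c - ⌊c - A⌋) h1 h3
    refine ⟨i, ⌊c - A⌋, ?_, ?_, hcl, by ring⟩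
    · exact lt_of_le_of_ne hia (fun h => hcl (h ▸ hXmem_rng i _ (hamem i)))
    · exact lt_of_le_of_ne hib (fun h => hcl (h.symm ▸ hXmem_rng i _ (hbmem i)))
  have hup : ∀ c, c ∉ X → ∃ u ∈ X, u < c ∧ c < F u := by
    intro c hc
    obtain ⟨i, l, hia, hib, hcX, hceq⟩ := hshift c hc
    obtain ⟨ka, hka⟩ := hamem i
    obtain ⟨kb, hkb⟩ := hbmem i
    have hka' : F^[ka] (x i) = sInf (rng i) := hka
    have hkb' : F^[kb] (x i) = sSup (rng i) := hkb
    obtain ⟨k, hk1, hk2⟩ := cyclic_cross_up' F N hNpos (x i) (hNper i) (c - l)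
      (hnocX i _ hcX) ka kb (by rw [hka']; exact hia) (by rw [hkb']; exact hib)
    refine ⟨F^[k] (x i) + l, ⟨i, k, l, rfl⟩, ?_, ?_⟩
    · have : F^[k] (x i) < c - l := hk1
      linarith
    · rw [lift_int F hlift]
      have h5 : c - l < F (F^[k] (x i)) := by
        have := hk2
        rwa [Function.iterate_succ_apply'] at this
      linarith
  have hdn : ∀ c, c ∉ X → ∃ v ∈ X, c < v ∧ F v < c := by
    intro c hc
    obtain ⟨i, l, hia, hib, hcX, hceq⟩ := hshift c hc
    obtain ⟨ka, hka⟩ := hamem i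
    obtain ⟨kb, hkb⟩ := hbmem i
    have hka' : F^[ka] (x i) = sInf (rng i) := hka
    have hkb' : F^[kb] (x i) = sSup (rng i) := hkb
    obtain ⟨k, hk1, hk2⟩ := cyclic_cross_dn' F N hNpos (x i) (hNper i) (c - l)
      (hnocX i _ hcX) kb ka (by rw [hkb']; exact hib) (by rw [hka']; exact hia)
    refine ⟨F^[k] (x i) + l, ⟨i, k, l, rfl⟩, ?_, ?_⟩
    · have : c - l < F^[k] (x i) := hk1
      linarith
    · rw [lift_int F hlift]
      have h5 : F (F^[k] (x i)) < c - l := by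
        have := hk2
        rwa [Function.iterate_succ_apply'] at this
      linarith
  obtain ⟨Tb, Sb, hTb, hSb⟩ := disp_bound F hF hlift
  have hxne : X.Nonempty := ⟨F^[0] (x (Classical.arbitrary _)), hxiX _ 0⟩
  let C : Ctx F := ⟨X, N, hNpos, hXper, hFX, hXfin, hup, hdn, Tb, Sb, hTb, hSb, hxne⟩
  have hL : LConf F := machine C hF hlift
  intro m hm
  obtain ⟨y, h1, h2⟩ := lconf_periods F hF hL m hm
  exact ⟨y, h1, h2⟩
end

section
/- Let F : ℝ → ℝ be a continuous map and let r < s < u be real numbers. Set I = [r, s] and J = [s, u]. Assume F(I) ⊇ I ∪ J, F(J) ⊇ I, and F(s) ∉ I ∪ J. Then for every integer ℓ ≥ 1, F has a periodic point of exact period ℓ, i.e., a point x with F^ℓ(x) = x and F^i(x) ≠ x for 1 ≤ i ≤ ℓ−1. -/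
open Set

/-- Core: oriented covering lemma. -/
lemma cover_core (F : ℝ → ℝ) (hF : Continuous F) {p q c d : ℝ} (hpq : p ≤ q) (hcd : c ≤ d)
    (hp : F p = c) (hq : F q = d) :
    ∃ a' b', p ≤ a' ∧ a' ≤ b' ∧ b' ≤ q ∧ F '' Icc a' b' = Icc c d := by
  set S : Set ℝ := Icc p q ∩ F ⁻¹' {d} with hS
  have hSc : IsClosed S := isClosed_Icc.inter (isClosed_singleton.preimage hF)
  have hSne : S.Nonempty := ⟨q, ⟨hpq, le_refl q⟩, hq⟩
  have hSbd : BddBelow S := ⟨p, fun x hx => hx.1.1⟩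
  set b' := sInf S with hb'
  have hb'S : b' ∈ S := hSc.csInf_mem hSne hSbd
  have hpb' : p ≤ b' := hb'S.1.1
  have hb'q : b' ≤ q := hb'S.1.2
  have hFb' : F b' = d := hb'S.2
  set T : Set ℝ := Icc p b' ∩ F ⁻¹' {c} with hT
  have hTc : IsClosed T := isClosed_Icc.inter (isClosed_singleton.preimage hF)
  have hTne : T.Nonempty := ⟨p, ⟨le_refl p, hpb'⟩, hp⟩
  have hTbd : BddAbove T := ⟨b', fun x hx => hx.1.2⟩
  set a' := sSup T with ha'
  have ha'T : a' ∈ T := hTc.csSup_mem hTne hTbd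
  have hpa' : p ≤ a' := ha'T.1.1
  have ha'b' : a' ≤ b' := ha'T.1.2
  have hFa' : F a' = c := ha'T.2
  refine ⟨a', b', hpa', ha'b', hb'q, ?_⟩
  apply Subset.antisymm
  · rintro y ⟨x, hx, rfl⟩
    constructor
    · by_contra h
      push_neg at h
      have h0 : c ∈ Icc (F x) (F b') := ⟨h.le, hFb' ▸ hcd⟩
      obtain ⟨z, hz, hFz⟩ := intermediate_value_Icc hx.2 hF.continuousOn h0
      have hzT : z ∈ T := ⟨⟨le_trans hpa' (le_trans hx.1 hz.1), hz.2⟩, hFz⟩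
      have : z ≤ a' := le_csSup hTbd hzT
      have hxa : a' < x := lt_of_le_of_ne hx.1 (fun e => h.ne (e ▸ hFa'))
      linarith [hz.1]
    · by_contra h
      push_neg at h
      have h0 : d ∈ Icc (F a') (F x) := ⟨hFa' ▸ hcd, h.le⟩
      obtain ⟨z, hz, hFz⟩ := intermediate_value_Icc hx.1 hF.continuousOn h0
      have hzS : z ∈ S := ⟨⟨le_trans hpa' hz.1, le_trans hz.2 (le_trans hx.2 hb'q)⟩, hFz⟩
      have : b' ≤ z := csInf_le hSbd hzS
      have hxb : x < b' := lt_of_le_of_ne hx.2 (fun e => h.ne (e ▸ hFb').symm)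
      linarith [hz.2]
  · have := intermediate_value_Icc ha'b' hF.continuousOn
    rwa [hFa', hFb'] at this

/-- Covering lemma, unoriented. -/
lemma cover (F : ℝ → ℝ) (hF : Continuous F) {a b c d : ℝ} (hab : a ≤ b) (hcd : c ≤ d)
    (hcov : Icc c d ⊆ F '' Icc a b) :
    ∃ a' b', a ≤ a' ∧ a' ≤ b' ∧ b' ≤ b ∧ F '' Icc a' b' = Icc c d := by
  obtain ⟨p, hpI, hpc⟩ := hcov (left_mem_Icc.2 hcd)
  obtain ⟨q, hqI, hqd⟩ := hcov (right_mem_Icc.2 hcd)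
  rcases le_total p q with hpq | hqp
  · obtain ⟨a', b', h1, h2, h3, h4⟩ := cover_core F hF hpq hcd hpc hqd
    exact ⟨a', b', le_trans hpI.1 h1, h2, le_trans h3 hqI.2, h4⟩
  · obtain ⟨a', b', h1, h2, h3, h4⟩ :=
      cover_core (fun x => F (-x)) (hF.comp continuous_neg) (neg_le_neg hqp) hcd
        (by simp [hpc]) (by simp [hqd])
    refine ⟨-b', -a', by linarith [hqI.1], by linarith, by linarith [hpI.2], ?_⟩
    rw [← h4]
    ext y
    constructor
    · rintro ⟨x, hx, rfl⟩
      exact ⟨-x, ⟨by linarith [hx.2], by linarith [hx.1]⟩, by simp⟩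
    · rintro ⟨x, hx, rfl⟩
      exact ⟨-x, ⟨by linarith [hx.2], by linarith [hx.1]⟩, by simp⟩

/-- Chain (itinerary) lemma. -/
lemma chain (F : ℝ → ℝ) (hF : Continuous F) :
    ∀ (n : ℕ) (a b : ℕ → ℝ), (∀ i, a i ≤ b i) →
    (∀ i < n, Icc (a (i+1)) (b (i+1)) ⊆ F '' Icc (a i) (b i)) →
    ∃ a' b', a 0 ≤ a' ∧ a' ≤ b' ∧ b' ≤ b 0 ∧
      (∀ i ≤ n, F^[i] '' Icc a' b' ⊆ Icc (a i) (b i)) ∧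
      F^[n] '' Icc a' b' = Icc (a n) (b n) := by
  intro n
  induction n with
  | zero =>
    intro a b hab _
    exact ⟨a 0, b 0, le_refl _, hab 0, le_refl _, by
      intro i hi; interval_cases i; simp, by simp⟩
  | succ n ih =>
    intro a b hab hcov
    obtain ⟨a'', b'', h1, h2, h3, h4, h5⟩ :=
      ih (fun i => a (i+1)) (fun i => b (i+1)) (fun i => hab (i+1))
        (fun i hi => hcov (i+1) (by omega))
    have hsub : Icc a'' b'' ⊆ F '' Icc (a 0) (b 0) := by
      refine Subset.trans ?_ (hcov 0 (by omega))
      exact Icc_subset_Icc h1 h3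
    obtain ⟨a', b', g1, g2, g3, g4⟩ := cover F hF (hab 0) h2 hsub
    refine ⟨a', b', g1, g2, g3, ?_, ?_⟩
    · intro i hi
      cases i with
      | zero => simpa using Icc_subset_Icc g1 g3
      | succ i =>
        rw [Function.iterate_succ, Set.image_comp, g4]
        exact h4 i (by omega)
    · rw [Function.iterate_succ, Set.image_comp, g4]
      exact h5

/-- Fixed point from covering. -/
lemma fixed_of_cover (G : ℝ → ℝ) (hG : Continuous G) {a b : ℝ} (hab : a ≤ b)
    (hcov : Icc a b ⊆ G '' Icc a b) : ∃ x ∈ Icc a b, G x = x := by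
  obtain ⟨p, hpI, hp⟩ := hcov (left_mem_Icc.2 hab)
  obtain ⟨q, hqI, hq⟩ := hcov (right_mem_Icc.2 hab)
  have key : (0:ℝ) ∈ uIcc (G p - p) (G q - q) := by
    rw [hp, hq]
    rcases le_total (a - p) (b - q) with h | h
    · rw [uIcc_of_le h]
      exact ⟨by linarith [hpI.1], by linarith [hqI.2]⟩
    · rw [uIcc_of_ge h]
      exact ⟨by linarith [hqI.2, hpI.1], by linarith [hqI.2, hpI.1]⟩
  obtain ⟨x, hx, hx0⟩ := intermediate_value_uIcc
    ((hG.sub continuous_id).continuousOn (s := uIcc p q)) key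
  refine ⟨x, uIcc_subset_Icc hpI hqI hx, ?_⟩
  have h0 : G x - x = 0 := hx0
  linarith

/-- A Markov-type horseshoe: if `I = [r,s]`, `J = [s,u]` with `r < s < u` satisfy
`F(I) ⊇ I ∪ J`, `F(J) ⊇ I` and `F(s) ∉ I ∪ J`, then `F` has periodic points of all
exact periods. -/
theorem periods_of_horseshoe
    (F : ℝ → ℝ) (hF : Continuous F)
    (r s u : ℝ) (hrs : r < s) (hsu : s < u)
    (hI : Set.Icc r s ∪ Set.Icc s u ⊆ F '' Set.Icc r s)
    (hJ : Set.Icc r s ⊆ F '' Set.Icc s u)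
    (hs : F s ∉ Set.Icc r s ∪ Set.Icc s u) :
    ∀ ℓ : ℕ, 1 ≤ ℓ → ∃ x : ℝ, HasExactPeriod F ℓ x := by
  have hII : Icc r s ⊆ F '' Icc r s := Subset.trans subset_union_left hI
  have hIJ : Icc s u ⊆ F '' Icc r s := Subset.trans subset_union_right hI
  intro ℓ hℓ
  rcases eq_or_lt_of_le hℓ with h1 | h2
  · -- ℓ = 1 : fixed point
    obtain ⟨x, hx, hfx⟩ := fixed_of_cover F hF hrs.le hII
    exact ⟨x, by simpa [HasExactPeriod, ← h1] using hfx, by omega⟩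
  · -- ℓ ≥ 2
    set a : ℕ → ℝ := fun i => if i = ℓ - 1 then s else r with ha
    set b : ℕ → ℝ := fun i => if i = ℓ - 1 then u else s with hb
    have hab : ∀ i, a i ≤ b i := by
      intro i; simp only [ha, hb]
      split <;> [exact hsu.le; exact hrs.le]
    have hcov : ∀ i < ℓ, Icc (a (i+1)) (b (i+1)) ⊆ F '' Icc (a i) (b i) := by
      intro i hi
      simp only [ha, hb]
      rcases eq_or_ne i (ℓ - 1) with h | h
      · subst h
        have h2' : ℓ - 1 + 1 ≠ ℓ - 1 := by omega
        simp only [if_pos rfl, if_neg h2']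
        exact hJ
      · rcases eq_or_ne (i+1) (ℓ - 1) with h' | h'
        · simp only [if_neg h, if_pos h']
          exact hIJ
        · simp only [if_neg h, if_neg h']
          exact hII
    obtain ⟨a', b', g1, g2, g3, g4, g5⟩ := chain F hF ℓ a b hab hcov
    have ha0 : a 0 = r := by simp [ha]; omega
    have hb0 : b 0 = s := by simp [hb]; omega
    have haℓ : a ℓ = r := by simp [ha]; omega
    have hbℓ : b ℓ = s := by simp [hb]; omega
    rw [ha0] at g1; rw [hb0] at g3
    rw [haℓ, hbℓ] at g5
    have hcov' : Icc a' b' ⊆ F^[ℓ] '' Icc a' b' := by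
      rw [g5]; exact Icc_subset_Icc g1 g3
    obtain ⟨x, hxI, hfx⟩ := fixed_of_cover (F^[ℓ]) (hF.iterate ℓ) g2 hcov'
    refine ⟨x, hfx, ?_⟩
    intro i hi1 hiℓ hix
    -- derive contradiction
    have hper : Function.IsPeriodicPt F i x := hix
    have hmem : ∀ k ≤ ℓ, F^[k] x ∈ Icc (a k) (b k) :=
      fun k hk => g4 k hk (mem_image_of_mem _ hxI)
    have hJmem : F^[ℓ-1] x ∈ Icc s u := by
      have := hmem (ℓ-1) (by omega)
      simpa [ha, hb] using this
    set j := (ℓ - 1) % i with hj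
    have hji : j < i := Nat.mod_lt _ (by omega)
    have heq : F^[j] x = F^[ℓ-1] x := hper.iterate_mod_apply (ℓ-1)
    have hImem : F^[j] x ∈ Icc r s := by
      have := hmem j (by omega)
      have hjne : j ≠ ℓ - 1 := by omega
      simpa [ha, hb, hjne] using this
    have hseq : F^[ℓ-1] x = s := le_antisymm (heq ▸ hImem.2) hJmem.1
    have hxFs : x = F s := by
      have : F^[ℓ] x = F (F^[ℓ-1] x) := by
        rw [← Function.iterate_succ_apply' F (ℓ-1) x]
        congr 1
        omega
      rw [hfx, hseq] at this
      exact this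
    apply hs
    left
    rw [← hxFs]
    exact Icc_subset_Icc g1 g3 hxI
end

section
/- Let F : ℝ → ℝ be a continuous map such that F(x+1) = F(x) + d for all x ∈ ℝ, where d ≥ 2 is an integer. Let p ∈ ℝ be such that F^j(p) ≥ p for every integer j ≥ 0. Then F^j(p+1) > p for every integer j ≥ 0 and the sequence (F^j(p+1))_{j≥0} diverges to +∞. -/
open Filter

lemma lift_int_shift (F : ℝ → ℝ) (d : ℤ)
    (hlift : ∀ x, F (x + 1) = F x + d) :
    ∀ (k : ℤ) (x : ℝ), F (x + k) = F x + d * k := by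
  intro k
  induction k using Int.induction_on with
  | zero => simp
  | succ n ih =>
      intro x
      have e : (x : ℝ) + ((n : ℤ) + 1 : ℤ) = (x + ((n : ℤ) : ℝ)) + 1 := by
        push_cast; ring
      rw [e, hlift]
      have := ih x
      push_cast at this ⊢
      linarith
  | pred n ih =>
      intro x
      have h := hlift (x + (-(n : ℤ) - 1 : ℤ))
      have e : (x : ℝ) + (-(n : ℤ) - 1 : ℤ) + 1 = x + (-(n : ℤ) : ℤ) := by
        push_cast; ring
      rw [e, ih] at h
      push_cast at h ⊢
      linarith

lemma iterate_int_shift (F : ℝ → ℝ) (d : ℤ)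
    (hlift : ∀ x, F (x + 1) = F x + d) :
    ∀ (j : ℕ) (x : ℝ) (k : ℤ), F^[j] (x + k) = F^[j] x + k * (d : ℝ) ^ j := by
  intro j
  induction j with
  | zero => intro x k; simp
  | succ n ih =>
      intro x k
      rw [Function.iterate_succ_apply, Function.iterate_succ_apply,
        lift_int_shift F d hlift k x]
      have : F x + (d : ℝ) * k = F x + ((d * k : ℤ) : ℝ) := by push_cast; ring
      rw [this, ih (F x) (d * k)]
      push_cast; ring

/-- If `F` is a lifting of a circle map of degree `d ≥ 2` and `p` satisfies
`F^j(p) ≥ p` for all `j ≥ 0`, then `F^j(p+1) > p` for all `j ≥ 0` and the sequence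
`(F^j(p+1))` diverges to `+∞`. -/
theorem iterates_of_shifted_point_diverge
    (F : ℝ → ℝ) (hF : Continuous F) (d : ℤ) (hd : 2 ≤ d)
    (hlift : ∀ x, F (x + 1) = F x + d)
    (p : ℝ) (hp : ∀ j : ℕ, p ≤ F^[j] p) :
    (∀ j : ℕ, p < F^[j] (p + 1)) ∧
    Tendsto (fun j : ℕ => F^[j] (p + 1)) atTop atTop := by
  have key : ∀ j : ℕ, F^[j] (p + 1) = F^[j] p + (d : ℝ) ^ j := by
    intro j
    have := iterate_int_shift F d hlift j p 1
    simpa using this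
  have hd2 : (2 : ℝ) ≤ (d : ℝ) := by exact_mod_cast hd
  have hpow : ∀ j : ℕ, (1 : ℝ) ≤ (d : ℝ) ^ j := fun j =>
    one_le_pow₀ (by linarith)
  constructor
  · intro j
    have := hp j
    have := hpow j
    rw [key j]; linarith
  · have hmono : ∀ j : ℕ, p + (d : ℝ) ^ j ≤ F^[j] (p + 1) := by
      intro j; rw [key j]; linarith [hp j]
    refine tendsto_atTop_mono hmono ?_
    exact tendsto_atTop_add_const_left _ p
      (tendsto_pow_atTop_atTop_of_one_lt (by linarith))
end

section
/- For every integer d ≥ 2 there exists a continuous map F : ℝ → ℝ with F(x+1) = F(x) − d for all x ∈ ℝ (a lifting of a circle map of degree −d) such that: 0 is a fixed point of F; {−3/4, 3/4} is a periodic orbit of F of period 2 whose diameter 3/2 is larger than 1; and the set of periodic points of F is exactly {−3/4, 0, 3/4}. In particular, F has no periodic point of exact period m for any m ≥ 3. -/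
open Set

/-- Piecewise linear bump: min/max of three lines. -/
noncomputable def hh (D t : ℝ) : ℝ :=
  min (max ((3 - 4*D)*t) (3/4 - D + (2*D-3)*(t-1/4))) (-3/4 + (3-4*D)*(t-3/4))

noncomputable def FF (D : ℝ) (x : ℝ) : ℝ := hh D (Int.fract x) - D * (⌊x⌋ : ℝ)

section lemmas
variable {D t : ℝ}

lemma hh_le (hD : 2 ≤ D) (ht0 : 0 ≤ t) (ht1 : t ≤ 1) : hh D t ≤ -t := by
  rcases le_total t (3/4) with h | h
  · refine le_trans (min_le_left _ _) (max_le ?_ ?_) <;> nlinarith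
  · refine le_trans (min_le_right _ _) ?_; nlinarith

lemma hh_lt (hD : 2 ≤ D) (ht0 : 0 < t) (ht1 : t ≤ 1) (hne : t ≠ 3/4) : hh D t < -t := by
  rcases lt_or_gt_of_ne hne with h | h
  · refine lt_of_le_of_lt (min_le_left _ _) (max_lt ?_ ?_) <;> nlinarith
  · refine lt_of_le_of_lt (min_le_right _ _) ?_; nlinarith

lemma hh_ge (hD : 2 ≤ D) (ht0 : 0 ≤ t) (ht1 : t ≤ 1) : 1 - t - D ≤ hh D t := by
  refine le_min ?_ (by nlinarith [mul_nonneg (by linarith : (0:ℝ) ≤ D - 1) (by linarith : (0:ℝ) ≤ 1 - t)])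
  rcases le_total t (1/4) with h | h
  · refine le_trans ?_ (le_max_left _ _)
    nlinarith [mul_nonneg (by linarith : (0:ℝ) ≤ D - 1) (by linarith : (0:ℝ) ≤ 1 - 4*t)]
  · refine le_trans ?_ (le_max_right _ _); nlinarith

lemma hh_gt (hD : 2 ≤ D) (ht0 : 0 ≤ t) (ht1 : t < 1) (hne : t ≠ 1/4) : 1 - t - D < hh D t := by
  refine lt_min ?_ (by nlinarith [mul_pos (by linarith : (0:ℝ) < D - 1) (by linarith : (0:ℝ) < 1 - t)])
  rcases lt_or_gt_of_ne hne with h | h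
  · refine lt_of_lt_of_le ?_ (le_max_left _ _)
    nlinarith [mul_pos (by linarith : (0:ℝ) < D - 1) (by linarith : (0:ℝ) < 1 - 4*t)]
  · refine lt_of_lt_of_le ?_ (le_max_right _ _); nlinarith

lemma hh_zero (hD : 2 ≤ D) : hh D 0 = 0 := by
  unfold hh
  rw [max_eq_left (by nlinarith), min_eq_left (by nlinarith)]
  ring

lemma hh_quarter (hD : 2 ≤ D) : hh D (1/4) = 3/4 - D := by
  unfold hh
  rw [show (3 - 4*D)*(1/4) = 3/4 - D + (2*D-3)*((1:ℝ)/4-1/4) by ring, max_self,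
    min_eq_left (by nlinarith)]
  ring

lemma hh_threequarter (hD : 2 ≤ D) : hh D (3/4) = -3/4 := by
  unfold hh
  rw [max_eq_right (by nlinarith), min_eq_right (by nlinarith)]
  ring

lemma hh_one (hD : 2 ≤ D) : hh D 1 = -D := by
  unfold hh
  rw [min_eq_right (le_max_of_le_right (by nlinarith))]
  ring

end lemmas

lemma FF_cont {D : ℝ} (hD : 2 ≤ D) : Continuous (FF D) := by
  have : FF D = fun x => (fun t => hh D t + D * t) (Int.fract x) - D * x := by
    funext x
    have : (⌊x⌋ : ℝ) = x - Int.fract x := by rw [Int.self_sub_fract]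
    simp only [FF, this]; ring
  rw [this]
  refine Continuous.sub ?_ (by fun_prop)
  refine ContinuousOn.comp_fract'' (f := fun t => hh D t + D * t) ?_ ?_
  · exact Continuous.continuousOn (by unfold hh; fun_prop)
  · simp [hh_zero hD, hh_one hD]

lemma floor_tq : ⌊(3/4 : ℝ)⌋ = 0 := by
  rw [Int.floor_eq_zero_iff]; constructor <;> norm_num

lemma floor_ntq : ⌊(-(3/4) : ℝ)⌋ = -1 := by
  rw [Int.floor_eq_iff]; norm_num

lemma FF_zero {D : ℝ} (hD : 2 ≤ D) : FF D 0 = 0 := by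
  simp [FF, Int.fract, hh_zero hD]

lemma FF_tq {D : ℝ} (hD : 2 ≤ D) : FF D (3/4) = -(3/4) := by
  simp [FF, Int.fract, floor_tq, hh_threequarter hD]; norm_num

lemma FF_ntq {D : ℝ} (hD : 2 ≤ D) : FF D (-(3/4)) = 3/4 := by
  have : Int.fract (-(3/4) : ℝ) = 1/4 := by
    rw [Int.fract, floor_ntq]; norm_num
  rw [FF, this, floor_ntq, hh_quarter hD]; push_cast; ring

/-- |F x| ≥ |x| everywhere. -/
lemma FF_abs_ge {D : ℝ} (hD : 2 ≤ D) (x : ℝ) : |x| ≤ |FF D x| := by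
  set t := Int.fract x with ht
  set n := ⌊x⌋ with hn
  have ht0 : 0 ≤ t := Int.fract_nonneg x
  have ht1 : t < 1 := Int.fract_lt_one x
  have hx : x = (n : ℝ) + t := by rw [ht, hn, Int.fract]; ring
  have hFx : FF D x = hh D t - D * n := rfl
  have h1 : hh D t ≤ -t := hh_le hD ht0 ht1.le
  have h2 : 1 - t - D ≤ hh D t := hh_ge hD ht0 ht1.le
  rcases le_or_gt 0 (n : ℝ) with hn0 | hn0
  · have hxpos : 0 ≤ x := by linarith
    have : FF D x ≤ -x := by
      rw [hFx, hx]; nlinarith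
    calc |x| = x := abs_of_nonneg hxpos
    _ ≤ -(FF D x) := by linarith
    _ ≤ |FF D x| := neg_le_abs _
  · have hn1 : (n : ℝ) ≤ -1 := by
      have h' : n < 0 := by exact_mod_cast hn0
      have h2 : n ≤ -1 := by omega
      have h3 : (n : ℝ) ≤ ((-1 : ℤ) : ℝ) := by exact_mod_cast h2
      simpa using h3
    have hxneg : x < 0 := by linarith
    have : -x ≤ FF D x := by
      rw [hFx, hx]
      nlinarith [mul_nonneg (by linarith : (0:ℝ) ≤ D - 1) (by linarith : (0:ℝ) ≤ -(n:ℝ) - 1)]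
    calc |x| = -x := abs_of_neg hxneg
    _ ≤ FF D x := this
    _ ≤ |FF D x| := le_abs_self _

/-- Strict inequality off the exceptional set. -/
lemma FF_abs_gt {D : ℝ} (hD : 2 ≤ D) (x : ℝ)
    (hx1 : x ≠ -(3/4)) (hx2 : x ≠ 0) (hx3 : x ≠ 3/4) : |x| < |FF D x| := by
  set t := Int.fract x with ht
  set n := ⌊x⌋ with hn
  have ht0 : 0 ≤ t := Int.fract_nonneg x
  have ht1 : t < 1 := Int.fract_lt_one x
  have hx : x = (n : ℝ) + t := by rw [ht, hn, Int.fract]; ring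
  have hFx : FF D x = hh D t - D * n := rfl
  have h1 : hh D t ≤ -t := hh_le hD ht0 ht1.le
  have h2 : 1 - t - D ≤ hh D t := hh_ge hD ht0 ht1.le
  rcases (by omega : n = 0 ∨ 1 ≤ n ∨ n = -1 ∨ n ≤ -2) with h | h | h | h
  · -- n = 0, x = t
    rw [h] at hx hFx
    have hxt : x = t := by rw [hx]; push_cast; ring
    have htne0 : t ≠ 0 := fun h => hx2 (by rw [hxt, h])
    have htne : t ≠ 3/4 := fun h => hx3 (by rw [hxt, h])
    have hlt : hh D t < -t := hh_lt hD (lt_of_le_of_ne ht0 (Ne.symm htne0)) ht1.le htne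
    have : FF D x < -t := by rw [hFx]; push_cast; linarith
    calc |x| = t := by rw [hxt, abs_of_nonneg ht0]
    _ < -(FF D x) := by linarith
    _ ≤ |FF D x| := neg_le_abs _
  · -- n ≥ 1
    have hn1 : (1 : ℝ) ≤ n := by exact_mod_cast h
    have hxpos : 0 ≤ x := by linarith
    have : FF D x < -x := by rw [hFx, hx]; nlinarith
    calc |x| = x := abs_of_nonneg hxpos
    _ < -(FF D x) := by linarith
    _ ≤ |FF D x| := neg_le_abs _
  · -- n = -1, x = t - 1
    rw [h] at hx hFx
    have hxt : x = t - 1 := by rw [hx]; push_cast; ring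
    have htne : t ≠ 1/4 := fun h => hx1 (by rw [hxt, h]; norm_num)
    have hgt : 1 - t - D < hh D t := hh_gt hD ht0 ht1 htne
    have : 1 - t < FF D x := by rw [hFx]; push_cast; linarith
    have hxneg : x < 0 := by rw [hxt]; linarith
    calc |x| = -x := abs_of_neg hxneg
    _ < FF D x := by linarith

    _ ≤ |FF D x| := le_abs_self _
  · -- n ≤ -2
    have hn2 : (n : ℝ) ≤ -2 := by exact_mod_cast h
    have hxneg : x < 0 := by linarith
    have : -x < FF D x := by
      rw [hFx, hx]
      nlinarith [mul_nonneg (by linarith : (0:ℝ) ≤ D - 1) (by linarith : (0:ℝ) ≤ -(n:ℝ) - 2)]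
    calc |x| = -x := abs_of_neg hxneg
    _ < FF D x := this
    _ ≤ |FF D x| := le_abs_self _

lemma FF_iter_abs {D : ℝ} (hD : 2 ≤ D) (k : ℕ) (y : ℝ) : |y| ≤ |(FF D)^[k] y| := by
  induction k with
  | zero => simp
  | succ m ih =>
    rw [Function.iterate_succ_apply']
    exact le_trans ih (FF_abs_ge hD _)

lemma periodic_mem {D : ℝ} (hD : 2 ≤ D) (x : ℝ) (n : ℕ) (hn : 1 ≤ n)
    (hfix : (FF D)^[n] x = x) : x = -(3/4) ∨ x = 0 ∨ x = 3/4 := by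
  by_contra hcon
  push_neg at hcon
  obtain ⟨h1, h2, h3⟩ := hcon
  have hgt : |x| < |FF D x| := FF_abs_gt hD x h1 h2 h3
  obtain ⟨m, rfl⟩ : ∃ m, n = m + 1 := ⟨n - 1, by omega⟩
  have := FF_iter_abs hD m (FF D x)
  rw [← Function.iterate_succ_apply, hfix] at this
  linarith


/-- For every `d ≥ 2` there is a lifting `F` of a circle map of degree `-d` having the
fixed point `0` and the period-two orbit `{-3/4, 3/4}` (of diameter `3/2 > 1`), whose set
of periodic points is exactly `{-3/4, 0, 3/4}`; in particular `F` has no periodic point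
of exact period `m` for any `m ≥ 3`. -/
theorem exists_degree_neg_d_lifting_with_large_orbit_and_few_periods
    (d : ℤ) (hd : 2 ≤ d) :
    ∃ F : ℝ → ℝ, Continuous F ∧ (∀ x, F (x + 1) = F x - d) ∧
      F 0 = 0 ∧
      HasExactPeriod F 2 (3 / 4 : ℝ) ∧
      (Set.range fun i : ℕ => F^[i] (3 / 4 : ℝ)) = {-(3 / 4 : ℝ), 3 / 4} ∧
      ((3 / 4 : ℝ) - -(3 / 4 : ℝ) > 1) ∧
      {x : ℝ | ∃ n : ℕ, 1 ≤ n ∧ F^[n] x = x} = {-(3 / 4 : ℝ), 0, 3 / 4} ∧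
      (∀ m : ℕ, 3 ≤ m → ¬∃ x : ℝ, HasExactPeriod F m x) := by
  have hD : (2 : ℝ) ≤ (d : ℝ) := by exact_mod_cast hd
  set D := (d : ℝ) with hDdef
  set F := FF D with hF
  have hF2 : F^[2] (3/4 : ℝ) = (3/4 : ℝ) := by
    have : F^[2] (3/4 : ℝ) = F (F (3/4)) := by
      rw [Function.iterate_succ_apply', Function.iterate_one]
    rw [this, hF, FF_tq hD, FF_ntq hD]
  have hF2' : F^[2] (-(3/4) : ℝ) = (-(3/4) : ℝ) := by
    have : F^[2] (-(3/4) : ℝ) = F (F (-(3/4))) := by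
      rw [Function.iterate_succ_apply', Function.iterate_one]
    rw [this, hF, FF_ntq hD, FF_tq hD]
  refine ⟨F, FF_cont hD, ?_, FF_zero hD, ?_, ?_, by norm_num, ?_, ?_⟩
  · intro x
    rw [hF]
    show hh D (Int.fract (x+1)) - D * (⌊x+1⌋ : ℝ) = hh D (Int.fract x) - D * (⌊x⌋ : ℝ) - D
    rw [Int.fract_add_one, Int.floor_add_one]
    push_cast; ring
  · -- exact period 2
    refine ⟨hF2, ?_⟩
    intro i hi1 hi2
    interval_cases i
    rw [Function.iterate_one, hF, FF_tq hD]
    norm_num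
  · -- range of orbit
    have orbit : ∀ i : ℕ, F^[i] (3/4 : ℝ) = 3/4 ∨ F^[i] (3/4 : ℝ) = -(3/4) := by
      intro i
      induction i with
      | zero => left; simp
      | succ m ih =>
        rw [Function.iterate_succ_apply']
        rcases ih with h | h
        · right; rw [h, hF, FF_tq hD]
        · left; rw [h, hF, FF_ntq hD]
    ext y
    constructor
    · rintro ⟨i, rfl⟩
      rcases orbit i with h | h <;> simp [h]
    · intro hy
      rcases hy with h | h
      · refine ⟨1, ?_⟩
        show F^[1] (3/4 : ℝ) = y
        rw [Function.iterate_one, hF, FF_tq hD, h]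
      · refine ⟨0, ?_⟩
        show F^[0] (3/4 : ℝ) = y
        rw [Function.iterate_zero_apply, Set.mem_singleton_iff.mp h]
  · -- periodic point set
    ext x
    simp only [Set.mem_setOf_eq, Set.mem_insert_iff, Set.mem_singleton_iff]
    constructor
    · rintro ⟨n, hn, hfix⟩
      exact periodic_mem hD x n hn hfix
    · rintro (rfl | rfl | rfl)
      · exact ⟨2, by norm_num, hF2'⟩
      · exact ⟨1, le_refl 1, by rw [Function.iterate_one]; exact FF_zero hD⟩
      · exact ⟨2, by norm_num, hF2⟩
  · -- no exact period ≥ 3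
    rintro m hm ⟨x, hfix, hmin⟩
    rcases periodic_mem hD x m (by omega) hfix with rfl | rfl | rfl
    · exact hmin 2 (by omega) (by omega) hF2'
    · exact hmin 1 (by omega) (by omega) (by rw [Function.iterate_one]; exact FF_zero hD)
    · exact hmin 2 (by omega) (by omega) hF2
end
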